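/- arXiv:1901.08727 — 8 statements merged into one kernel-verified Lean document; each statement's English description precedes it below -/
import Mathlib

section
/- For every x in the simplex Δ_n, the matrix I_n − ΘW(x) is invertible and the matrix V(x) = (I_n − ΘW(x))^{−1}(I_n − Θ) is row-stochastic, i.e., all entries of V(x) are nonnegative and each row of V(x) sums to 1. -/
/-!
Write `A = Θ W(x)`. Since `W(x)` is row-stochastic, `A` is entrywise nonnegative with row sums
`θ_i < 1`, so its ∞-operator norm is below `1`. Hence `I - A` is invertible and its inverse is the
Neumann series `∑ Aᵏ`, which is entrywise nonnegative. Finally `(I - Θ) 𝟙 = 𝟙 - θ = (I - A) 𝟙`,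
so `V(x) 𝟙 = (I - A)⁻¹ (I - A) 𝟙 = 𝟙`.
-/

open Matrix

/-- `W(x) = diag(x) + (I - diag(x)) C` -/
noncomputable def Wmat {n : ℕ} (C : Matrix (Fin n) (Fin n) ℝ) (x : Fin n → ℝ) :
    Matrix (Fin n) (Fin n) ℝ :=
  Matrix.diagonal x + (1 - Matrix.diagonal x) * C

/-- The simplex `Δ_n`. -/
def simplex (n : ℕ) : Set (Fin n → ℝ) := {x | (∀ i, 0 ≤ x i) ∧ ∑ i, x i = 1}

namespace Matrix

variable {n : Type*} [Fintype n] [DecidableEq n]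

section LinftyOpNorm

attribute [local instance] Matrix.linftyOpNormedRing Matrix.linftyOpNormedAlgebra

lemma linfty_opNorm_lt_one_of_nonneg {A : Matrix n n ℝ} (hA : ∀ i j, 0 ≤ A i j)
    (hrow : ∀ i, ∑ j, A i j < 1) : ‖A‖ < 1 := by
  rw [← coe_nnnorm, ← NNReal.coe_one, NNReal.coe_lt_coe, linfty_opNNNorm_def,
    Finset.sup_lt_iff (by simp)]
  intro i _
  rw [← NNReal.coe_lt_coe, NNReal.coe_sum, NNReal.coe_one]
  calc ∑ j, (‖A i j‖₊ : ℝ) = ∑ j, A i j :=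
        Finset.sum_congr rfl fun j _ => Real.norm_of_nonneg (hA i j)
    _ < 1 := hrow i

lemma inv_one_sub_apply_nonneg {A : Matrix n n ℝ} (hA : ∀ i j, 0 ≤ A i j) (hnorm : ‖A‖ < 1)
    (i j : n) : 0 ≤ (1 - A)⁻¹ i j := by
  have hneumann := hasSum_geom_series_inverse A hnorm
  rw [← nonsing_inv_eq_ringInverse] at hneumann
  exact (Pi.hasSum.1 (Pi.hasSum.1 hneumann i) j).nonneg fun k => pow_apply_nonneg hA k i j

theorem inv_one_sub_diagonal_mul_mul_mem_rowStochastic {P : Matrix n n ℝ}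
    (hP : P ∈ rowStochastic ℝ n) {θ : n → ℝ} (hθ0 : ∀ i, 0 ≤ θ i) (hθ1 : ∀ i, θ i < 1) :
    IsUnit (1 - diagonal θ * P) ∧
      (1 - diagonal θ * P)⁻¹ * (1 - diagonal θ) ∈ rowStochastic ℝ n := by
  set A := diagonal θ * P
  have hA : ∀ i j, 0 ≤ A i j := fun i j => by
    simpa only [A, diagonal_mul] using mul_nonneg (hθ0 i) (nonneg_of_mem_rowStochastic hP)
  have hdiagonal_one : diagonal θ *ᵥ 1 = θ := by
    ext i
    rw [mulVec_diagonal, Pi.one_apply, mul_one]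
  have hAone : A *ᵥ 1 = θ := by
    rw [← mulVec_mulVec, one_vecMul_of_mem_rowStochastic hP, hdiagonal_one]
  have hnorm : ‖A‖ < 1 := linfty_opNorm_lt_one_of_nonneg hA fun i => by
    rw [show ∑ j, A i j = (A *ᵥ 1) i by simp [mulVec, dotProduct], hAone]
    exact hθ1 i
  have hunit : IsUnit (1 - A) := isUnit_one_sub_of_norm_lt_one hnorm
  have hone_sub_diagonal : 1 - diagonal θ = diagonal (1 - θ) := by
    rw [← diagonal_one, diagonal_sub]
    rfl
  refine ⟨hunit, mem_rowStochastic.2 ⟨fun i j => ?_, ?_⟩⟩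
  · rw [hone_sub_diagonal, mul_diagonal]
    exact mul_nonneg (inv_one_sub_apply_nonneg hA hnorm i j) (sub_nonneg.2 (hθ1 j).le)
  · have hsame_rows : (1 - diagonal θ) *ᵥ 1 = (1 - A) *ᵥ 1 := by
      rw [sub_mulVec, sub_mulVec, hAone, hdiagonal_one]
    rw [← mulVec_mulVec, hsame_rows, mulVec_mulVec,
      nonsing_inv_mul _ ((isUnit_iff_isUnit_det _).1 hunit), one_mulVec]

end LinftyOpNorm

end Matrix

lemma Wmat_mem_rowStochastic {n : ℕ} {C : Matrix (Fin n) (Fin n) ℝ}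
    (hC : C ∈ rowStochastic ℝ (Fin n)) {x : Fin n → ℝ} (hx0 : ∀ i, 0 ≤ x i)
    (hx1 : ∀ i, x i ≤ 1) : Wmat C x ∈ rowStochastic ℝ (Fin n) := by
  have hone_sub_diagonal : 1 - diagonal x = diagonal (1 - x) := by
    rw [← diagonal_one, diagonal_sub]
    rfl
  refine mem_rowStochastic.2 ⟨fun i j => ?_, ?_⟩
  · rw [Wmat, hone_sub_diagonal, Matrix.add_apply, diagonal_mul, diagonal_apply]
    refine add_nonneg ?_ (mul_nonneg (sub_nonneg.2 (hx1 i)) (nonneg_of_mem_rowStochastic hC))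
    split_ifs
    exacts [hx0 i, le_rfl]
  · rw [Wmat, add_mulVec, ← mulVec_mulVec, one_vecMul_of_mem_rowStochastic hC, sub_mulVec,
      one_mulVec, add_sub_cancel]

theorem stmt0_general (n : ℕ) (C : Matrix (Fin n) (Fin n) ℝ)
    (hCnonneg : ∀ i j, 0 ≤ C i j) (hCrow : ∀ i, ∑ j, C i j = 1)
    (θ : Fin n → ℝ) (hθ0 : ∀ i, 0 ≤ θ i) (hθ1 : ∀ i, θ i < 1)
    (x : Fin n → ℝ) (hx : x ∈ simplex n) :
    IsUnit (1 - Matrix.diagonal θ * Wmat C x) ∧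
    (∀ i j, 0 ≤ ((1 - Matrix.diagonal θ * Wmat C x)⁻¹ * (1 - Matrix.diagonal θ)) i j) ∧
    (∀ i, ∑ j, ((1 - Matrix.diagonal θ * Wmat C x)⁻¹ * (1 - Matrix.diagonal θ)) i j = 1) := by
  have hW : Wmat C x ∈ rowStochastic ℝ (Fin n) :=
    Wmat_mem_rowStochastic (mem_rowStochastic_iff_sum.2 ⟨hCnonneg, hCrow⟩) hx.1
      fun i => (mem_Icc_of_mem_stdSimplex hx i).2
  obtain ⟨hunit, hV⟩ := inv_one_sub_diagonal_mul_mul_mem_rowStochastic hW hθ0 hθ1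
  exact ⟨hunit, mem_rowStochastic_iff_sum.1 hV⟩

theorem stmt0 (n : ℕ) (hn : 2 ≤ n) (C : Matrix (Fin n) (Fin n) ℝ)
    (hCnonneg : ∀ i j, 0 ≤ C i j) (hCrow : ∀ i, ∑ j, C i j = 1)
    (hCdiag : ∀ i, C i i = 0)
    (θ : Fin n → ℝ) (hθ0 : ∀ i, 0 ≤ θ i) (hθ1 : ∀ i, θ i < 1) (hθex : ∃ j, 0 < θ j)
    (x : Fin n → ℝ) (hx : x ∈ simplex n) :
    IsUnit (1 - Matrix.diagonal θ * Wmat C x) ∧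
    (∀ i j, 0 ≤ ((1 - Matrix.diagonal θ * Wmat C x)⁻¹ * (1 - Matrix.diagonal θ)) i j) ∧
    (∀ i, ∑ j, ((1 - Matrix.diagonal θ * Wmat C x)⁻¹ * (1 - Matrix.diagonal θ)) i j = 1) :=
  stmt0_general n C hCnonneg hCrow θ hθ0 hθ1 x hx
end

section
/- A point x* ∈ Δ_n satisfies F(x*) = x* if and only if the pair (V*, x*), with V* = (I_n − ΘW(x*))^{−1}(I_n − Θ), satisfies both V* = ΘW(x*)V* + I_n − Θ and x* = (1/n)(V*)ᵀ1_n; that is, x* is an equilibrium of the issue-sequence model if and only if (V*, x*) is an equilibrium of the single-issue model. -/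
open Matrix

/-- `F(x) = (I - Θ)(I - W(x)ᵀΘ)⁻¹ (1/n) 1_n` -/
noncomputable def Fmap {n : ℕ} (C : Matrix (Fin n) (Fin n) ℝ) (θ : Fin n → ℝ)
    (x : Fin n → ℝ) : Fin n → ℝ :=
  ((1 - Matrix.diagonal θ) * (1 - (Wmat C x)ᵀ * Matrix.diagonal θ)⁻¹).mulVec
    (fun _ => 1 / (n : ℝ))

theorem stmt1 (n : ℕ) (hn : 2 ≤ n) (C : Matrix (Fin n) (Fin n) ℝ)
    (hCnonneg : ∀ i j, 0 ≤ C i j) (hCrow : ∀ i, ∑ j, C i j = 1)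
    (hCdiag : ∀ i, C i i = 0)
    (θ : Fin n → ℝ) (hθ0 : ∀ i, 0 ≤ θ i) (hθ1 : ∀ i, θ i < 1) (hθex : ∃ j, 0 < θ j)
    (xstar : Fin n → ℝ) (hx : xstar ∈ simplex n) :
    Fmap C θ xstar = xstar ↔
      ((1 - Matrix.diagonal θ * Wmat C xstar)⁻¹ * (1 - Matrix.diagonal θ) =
          Matrix.diagonal θ * Wmat C xstar *
            ((1 - Matrix.diagonal θ * Wmat C xstar)⁻¹ * (1 - Matrix.diagonal θ)) +
            (1 - Matrix.diagonal θ) ∧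
        xstar = (n : ℝ)⁻¹ •
          ((1 - Matrix.diagonal θ * Wmat C xstar)⁻¹ * (1 - Matrix.diagonal θ))ᵀ.mulVec
            (fun _ => 1)) := by
  obtain ⟨hx0, hxs⟩ := hx
  have hx1 : ∀ i, xstar i ≤ 1 := by
    intro i
    rw [← hxs]
    exact Finset.single_le_sum (fun j _ => hx0 j) (Finset.mem_univ i)
  set W : Matrix (Fin n) (Fin n) ℝ := Wmat C xstar with hWdef
  have hW : ∀ i j, W i j = Matrix.diagonal xstar i j + (1 - xstar i) * C i j := by
    intro i j
    simp [hWdef, Wmat, Matrix.add_apply, Matrix.sub_apply, Matrix.sub_mul,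
      Matrix.diagonal_mul, Matrix.one_mul]
    ring
  have hWnn : ∀ i j, 0 ≤ W i j := by
    intro i j
    rw [hW]
    have : 0 ≤ (1 - xstar i) * C i j :=
      mul_nonneg (by linarith [hx1 i]) (hCnonneg i j)
    rcases eq_or_ne i j with h | h
    · subst h; simp [Matrix.diagonal_apply_eq, hCdiag]; exact hx0 i
    · simp [Matrix.diagonal_apply_ne _ h]; exact this
  have hWrow : ∀ i, ∑ j, W i j = 1 := by
    intro i
    simp_rw [hW]
    rw [Finset.sum_add_distrib, ← Finset.mul_sum, hCrow]
    simp [Matrix.diagonal_apply]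
  have hWdiag : ∀ i, W i i = xstar i := by
    intro i; rw [hW, hCdiag]; simp
  set A : Matrix (Fin n) (Fin n) ℝ := 1 - Matrix.diagonal θ * W with hAdef
  have hAentry : ∀ i j, A i j = (1 : Matrix (Fin n) (Fin n) ℝ) i j - θ i * W i j := by
    intro i j
    simp [hAdef, Matrix.sub_apply, Matrix.diagonal_mul]
  have hdet : A.det ≠ 0 := by
    apply det_ne_zero_of_sum_row_lt_diag
    intro k
    have hsum : ∑ j ∈ Finset.univ.erase k, W k j = 1 - xstar k := by
      have := Finset.sum_erase_add Finset.univ (fun j => W k j) (Finset.mem_univ k)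
      simp only [hWrow k] at this
      simp only [hWdiag k] at this
      linarith
    have h1 : ∀ j ∈ Finset.univ.erase k, ‖A k j‖ = θ k * W k j := by
      intro j hj
      have hjk : j ≠ k := Finset.ne_of_mem_erase hj
      rw [hAentry, Matrix.one_apply_ne' hjk]
      rw [zero_sub, norm_neg, Real.norm_eq_abs, abs_of_nonneg
        (mul_nonneg (hθ0 k) (hWnn k j))]
    rw [Finset.sum_congr rfl h1, ← Finset.mul_sum, hsum]
    have hAkk : A k k = 1 - θ k * xstar k := by
      rw [hAentry, Matrix.one_apply_eq, hWdiag]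
    rw [hAkk, Real.norm_eq_abs, abs_of_pos]
    · nlinarith [hθ1 k, hθ0 k, hx0 k, hx1 k]
    · nlinarith [hθ1 k, hθ0 k, hx0 k, hx1 k]
  have hAinv : A * A⁻¹ = 1 := Matrix.mul_nonsing_inv A (isUnit_iff_ne_zero.2 hdet)
  have h1 : Matrix.diagonal θ * W * (A⁻¹ * (1 - Matrix.diagonal θ)) + (1 - Matrix.diagonal θ)
      = A⁻¹ * (1 - Matrix.diagonal θ) := by
    have hAW : Matrix.diagonal θ * W = 1 - A := by rw [hAdef]; abel
    rw [hAW, Matrix.sub_mul, Matrix.one_mul, ← Matrix.mul_assoc, hAinv, Matrix.one_mul]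
    abel
  have hFeq : Fmap C θ xstar
      = (n : ℝ)⁻¹ • (A⁻¹ * (1 - Matrix.diagonal θ))ᵀ.mulVec (fun _ => 1) := by
    have htr : (1 - Wᵀ * Matrix.diagonal θ) = Aᵀ := by
      rw [hAdef, Matrix.transpose_sub, Matrix.transpose_one, Matrix.transpose_mul,
        Matrix.diagonal_transpose]
    have hinvtr : (Aᵀ)⁻¹ = (A⁻¹)ᵀ := A.transpose_nonsing_inv.symm
    have hmul : (1 - Matrix.diagonal θ) * (Aᵀ)⁻¹ = (A⁻¹ * (1 - Matrix.diagonal θ))ᵀ := by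
      rw [hinvtr, Matrix.transpose_mul, Matrix.transpose_sub, Matrix.transpose_one,
        Matrix.diagonal_transpose]
    have hv : (fun _ : Fin n => 1 / (n : ℝ)) = (n : ℝ)⁻¹ • (fun _ : Fin n => (1 : ℝ)) := by
      funext i; simp [one_div]
    rw [Fmap, ← hWdef, htr, hmul, hv, Matrix.mulVec_smul]
  constructor
  · intro hF
    exact ⟨h1.symm, by rw [← hFeq, hF]⟩
  · rintro ⟨-, h2⟩
    rw [hFeq, ← h2]
end

section
/- For every x ∈ Δ_n and every index i, the i-th component of F(x) satisfies (1 − θ_i)/n ≤ F_i(x) ≤ (1 + ζ)/n, where ζ = n·θ_ave − θ_min. -/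
open Matrix

attribute [local instance] Matrix.linftyOpNormedRing Matrix.linftyOpNormedAlgebra

/-- Key lemma: if `B` is entrywise nonnegative with row sums `< 1`, then `1 - Bᵀ` has a
two-sided inverse with nonnegative entries. -/
lemma key_inv {n : ℕ} (B : Matrix (Fin n) (Fin n) ℝ)
    (hnn : ∀ i j, 0 ≤ B i j) (hrow : ∀ i, ∑ j, B i j < 1) :
    ∃ M : Matrix (Fin n) (Fin n) ℝ, (∀ i j, 0 ≤ M i j) ∧
      (1 - Bᵀ) * M = 1 ∧ M * (1 - Bᵀ) = 1 := by
  haveI : CompleteSpace (Matrix (Fin n) (Fin n) ℝ) := FiniteDimensional.complete ℝ _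
  have hB : ‖B‖ < 1 := by
    rw [Matrix.linfty_opNorm_def]
    have h2 : ((Finset.univ : Finset (Fin n)).sup fun i => ∑ j, ‖B i j‖₊) < 1 := by
      apply Finset.sup_lt_iff (by norm_num : (⊥ : NNReal) < 1) |>.2
      intro i _
      have h1 : ((∑ j, ‖B i j‖₊ : NNReal) : ℝ) < 1 := by
        push_cast
        have he : ∀ j, ‖B i j‖ = B i j := fun j => by
          rw [Real.norm_eq_abs, abs_of_nonneg (hnn i j)]
        rw [Finset.sum_congr rfl fun j _ => he j]
        exact hrow i
      exact_mod_cast h1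
    exact_mod_cast h2
  have hsum : Summable (fun k : ℕ => B ^ k) := summable_geometric_of_norm_lt_one hB
  set S : Matrix (Fin n) (Fin n) ℝ := ∑' k : ℕ, B ^ k with hS
  have hSnn : ∀ i j, 0 ≤ S i j := by
    intro i j
    have hpow : ∀ (k : ℕ) (i j : Fin n), 0 ≤ (B ^ k) i j := by
      intro k
      induction k with
      | zero => intro i j; rw [pow_zero]; rw [Matrix.one_apply]; positivity
      | succ m ih =>
        intro i j
        rw [pow_succ, Matrix.mul_apply]
        exact Finset.sum_nonneg fun l _ => mul_nonneg (ih i l) (hnn l j)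
    let f : Matrix (Fin n) (Fin n) ℝ →ₗ[ℝ] ℝ :=
      { toFun := fun A => A i j
        map_add' := fun _ _ => rfl
        map_smul' := fun _ _ => rfl }
    let g := LinearMap.toContinuousLinearMap f
    have hmap : g S = ∑' k : ℕ, g (B ^ k) := g.map_tsum hsum
    have hij : S i j = ∑' k : ℕ, (B ^ k) i j := hmap
    rw [hij]
    exact tsum_nonneg fun k => hpow k i j
  refine ⟨Sᵀ, fun i j => hSnn j i, ?_, ?_⟩
  · have h := geom_series_mul_neg B hB
    have h' := congrArg Matrix.transpose h
    rwa [Matrix.transpose_mul, Matrix.transpose_sub, Matrix.transpose_one] at h'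
  · have h := mul_neg_geom_series B hB
    have h' := congrArg Matrix.transpose h
    rwa [Matrix.transpose_mul, Matrix.transpose_sub, Matrix.transpose_one] at h'

theorem stmt2 (n : ℕ) (hn : 2 ≤ n) (C : Matrix (Fin n) (Fin n) ℝ)
    (hCnonneg : ∀ i j, 0 ≤ C i j) (hCrow : ∀ i, ∑ j, C i j = 1)
    (hCdiag : ∀ i, C i i = 0)
    (θ : Fin n → ℝ) (hθ0 : ∀ i, 0 ≤ θ i) (hθ1 : ∀ i, θ i < 1) (hθex : ∃ j, 0 < θ j)
    (θmin θave ζ : ℝ) (hθmin : IsLeast (Set.range θ) θmin)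
    (hθave : θave = (∑ i, θ i) / n) (hζ : ζ = n * θave - θmin)
    (x : Fin n → ℝ) (hx : x ∈ simplex n) (i : Fin n) :
    (1 - θ i) / n ≤ Fmap C θ x i ∧ Fmap C θ x i ≤ (1 + ζ) / n := by
  obtain ⟨hx0, hx1⟩ := hx
  have hn0 : (0:ℝ) < n := by
    have : (2:ℝ) ≤ n := by exact_mod_cast hn
    linarith
  have hxle : ∀ j, x j ≤ 1 := by
    intro j
    calc x j ≤ ∑ k, x k := Finset.single_le_sum (fun k _ => hx0 k) (Finset.mem_univ j)
    _ = 1 := hx1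
  -- entries of W
  have h1d : (1 : Matrix (Fin n) (Fin n) ℝ) - Matrix.diagonal x
      = Matrix.diagonal (fun k => 1 - x k) := by
    rw [← Matrix.diagonal_one, Matrix.diagonal_sub]
  have hW : ∀ a b, Wmat C x a b = (if a = b then x a else 0) + (1 - x a) * C a b := by
    intro a b
    rw [Wmat, h1d, Matrix.add_apply, Matrix.diagonal_mul, Matrix.diagonal_apply]
  have hWnn : ∀ a b, 0 ≤ Wmat C x a b := by
    intro a b
    rw [hW]
    have h1 : (0:ℝ) ≤ if a = b then x a else 0 := by split <;> [exact hx0 a; exact le_rfl]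
    exact add_nonneg h1 (mul_nonneg (by linarith [hxle a]) (hCnonneg a b))
  have hWrow : ∀ a, ∑ b, Wmat C x a b = 1 := by
    intro a
    have : ∑ b, Wmat C x a b
        = ∑ b, ((if a = b then x a else 0) + (1 - x a) * C a b) :=
      Finset.sum_congr rfl fun b _ => hW a b
    rw [this, Finset.sum_add_distrib, Finset.sum_ite_eq Finset.univ a (fun _ => x a),
      ← Finset.mul_sum, hCrow a]
    simp
  -- the matrix B = Θ W
  set B : Matrix (Fin n) (Fin n) ℝ := Matrix.diagonal θ * Wmat C x with hBdef
  have hBapp : ∀ a b, B a b = θ a * Wmat C x a b := fun a b => Matrix.diagonal_mul _ _ _ _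
  have hBnn : ∀ a b, 0 ≤ B a b := fun a b => by
    rw [hBapp]; exact mul_nonneg (hθ0 a) (hWnn a b)
  have hBrow_eq : ∀ a, ∑ b, B a b = θ a := by
    intro a
    rw [Finset.sum_congr rfl fun b _ => hBapp a b, ← Finset.mul_sum, hWrow a, mul_one]
  have hBrow : ∀ a, ∑ b, B a b < 1 := fun a => by rw [hBrow_eq]; exact hθ1 a
  obtain ⟨M, hMnn, hM1, hM2⟩ := key_inv B hBnn hBrow
  have hA : (Wmat C x)ᵀ * Matrix.diagonal θ = Bᵀ := by
    rw [hBdef, Matrix.transpose_mul, Matrix.diagonal_transpose]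
  have hinv : (1 - (Wmat C x)ᵀ * Matrix.diagonal θ)⁻¹ = M := by
    rw [hA]; exact Matrix.inv_eq_right_inv hM1
  set c : Fin n → ℝ := fun _ => 1 / (n:ℝ) with hc
  set y : Fin n → ℝ := M.mulVec c with hy
  have hynn : ∀ a, 0 ≤ y a := by
    intro a
    rw [hy, Matrix.mulVec, dotProduct]
    exact Finset.sum_nonneg fun b _ => mul_nonneg (hMnn a b) (by positivity)
  -- the fixed-point equation
  have hfix : ∀ a, y a = 1 / n + ∑ b, B b a * y b := by
    have h := congrArg (fun P : Matrix (Fin n) (Fin n) ℝ => P.mulVec c) hM1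
    rw [← Matrix.mulVec_mulVec, ← hy, Matrix.one_mulVec, Matrix.sub_mulVec,
      Matrix.one_mulVec] at h
    intro a
    have ha := congrFun h a
    simp only [Pi.sub_apply] at ha
    have : (Bᵀ.mulVec y) a = ∑ b, B b a * y b := by
      rw [Matrix.mulVec, dotProduct]
      exact Finset.sum_congr rfl fun b _ => by rw [Matrix.transpose_apply]
    rw [this] at ha
    have hca : c a = 1 / n := rfl
    linarith [ha]
  have hyge : ∀ a, 1 / (n:ℝ) ≤ y a := by
    intro a
    rw [hfix a]
    have : 0 ≤ ∑ b, B b a * y b :=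
      Finset.sum_nonneg fun b _ => mul_nonneg (hBnn b a) (hynn b)
    linarith
  -- F in terms of y
  have hF : ∀ a, Fmap C θ x a = (1 - θ a) * y a := by
    intro a
    rw [Fmap, hinv, ← Matrix.mulVec_mulVec, ← hc, ← hy, Matrix.sub_mulVec,
      Matrix.one_mulVec]
    simp only [Pi.sub_apply]
    rw [Matrix.mulVec_diagonal]
    ring
  -- sum of y
  have hysum : ∑ a, y a = 1 + ∑ b, θ b * y b := by
    have h1 : ∑ a, y a = ∑ a, (1 / (n:ℝ) + ∑ b, B b a * y b) :=
      Finset.sum_congr rfl fun a _ => hfix a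
    have h2 : ∑ _a : Fin n, (1 / (n:ℝ)) = 1 := by
      rw [Finset.sum_const, Finset.card_univ, Fintype.card_fin, nsmul_eq_mul]
      field_simp
    have h3 : ∑ a : Fin n, ∑ b, B b a * y b = ∑ b, θ b * y b := by
      rw [Finset.sum_comm]
      refine Finset.sum_congr rfl fun b _ => ?_
      rw [← Finset.sum_mul, hBrow_eq b]
    rw [h1, Finset.sum_add_distrib, h2, h3]
  -- sum of F equals 1
  have hFsum : ∑ a, Fmap C θ x a = 1 := by
    rw [Finset.sum_congr rfl fun a _ => hF a]
    have : ∑ a, (1 - θ a) * y a = ∑ a, y a - ∑ a, θ a * y a := by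
      rw [← Finset.sum_sub_distrib]
      exact Finset.sum_congr rfl fun a _ => by ring
    rw [this, hysum]
    ring
  -- lower bound
  have hθa1 : ∀ a, 0 ≤ 1 - θ a := fun a => by linarith [hθ1 a]
  have hlow : ∀ a, (1 - θ a) / n ≤ Fmap C θ x a := by
    intro a
    rw [hF a, div_eq_mul_one_div]
    exact mul_le_mul_of_nonneg_left (hyge a) (hθa1 a)
  constructor
  · exact hlow i
  -- upper bound
  · have hsplit : Fmap C θ x i = 1 - ∑ a ∈ Finset.univ.erase i, Fmap C θ x a := by
      have := Finset.add_sum_erase Finset.univ (fun a => Fmap C θ x a) (Finset.mem_univ i)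
      rw [hFsum] at this
      linarith
    have hbound : ∑ a ∈ Finset.univ.erase i, (1 - θ a) / n
        ≤ ∑ a ∈ Finset.univ.erase i, Fmap C θ x a :=
      Finset.sum_le_sum fun a _ => hlow a
    have herase : ∑ a ∈ Finset.univ.erase i, (1 - θ a) / n
        = ((n:ℝ) - ∑ a, θ a) / n - (1 - θ i) / n := by
      rw [Finset.sum_erase_eq_sub (Finset.mem_univ i)]
      congr 1
      rw [← Finset.sum_div]
      congr 1
      rw [Finset.sum_sub_distrib, Finset.sum_const, Finset.card_univ, Fintype.card_fin,
        nsmul_eq_mul, mul_one]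
    have hθi : θmin ≤ θ i := hθmin.2 ⟨i, rfl⟩
    have hζ' : ζ = (∑ a, θ a) - θmin := by
      rw [hζ, hθave]
      field_simp
    rw [hsplit]
    have : ((n:ℝ) - ∑ a, θ a) / n - (1 - θ i) / n ≤ ∑ a ∈ Finset.univ.erase i, Fmap C θ x a := by
      rw [← herase]; exact hbound
    have hfinal : 1 - (((n:ℝ) - ∑ a, θ a) / n - (1 - θ i) / n) ≤ (1 + ζ) / n := by
      have hne : (n:ℝ) ≠ 0 := ne_of_gt hn0
      rw [hζ', le_div_iff₀ hn0]
      field_simp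
      nlinarith [hθi, hn0]
    linarith
end

section
/- Regard F as a map from the open set U = {x ∈ ℝ^n : I_n − W(x)ᵀΘ is invertible} into ℝ^n defined by the same formula F(x) = (I_n − Θ)(I_n − W(x)ᵀΘ)^{−1}(1/n)1_n. Then F is Fréchet differentiable at every x ∈ U (in particular at every point of the relative interior int Δ_n = {x > 0, 1ᵀx = 1}), and its Jacobian matrix at x equals (I_n − Θ)(I_n − W(x)ᵀΘ)^{−1}(I_n − Cᵀ)Θ(I_n − Θ)^{−1} diag(F(x)). -/
/-!
Write `A(y) = I - W(y)ᵀΘ = (I - CᵀΘ) - (I - Cᵀ) diag(y) Θ`, which is affine in `y`, and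
`v = (1/n) 1`. By the chain rule and `d(A⁻¹) = -A⁻¹ (dA) A⁻¹`, the derivative of
`F = (I - Θ) A⁻¹ v` in the direction `h` is `(I - Θ) A⁻¹ (I - Cᵀ) diag(h) Θ A⁻¹ v`.
Diagonal matrices commute, so `diag(h) Θ A⁻¹ v = Θ diag(A⁻¹ v) h`, and
`A⁻¹ v = (I - Θ)⁻¹ F(x)` because every `θ i ≠ 1`.
-/

open Matrix

-- Any norm would do; the ℓ∞ operator norm makes square matrices a complete normed algebra.
attribute [local instance] Matrix.linftyOpNormedAddCommGroup Matrix.linftyOpNormedSpace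
  Matrix.linftyOpNormedRing Matrix.linftyOpNormedAlgebra

section Calculus

variable {𝕜 : Type*} [RCLike 𝕜] {m n : Type*} [Fintype m] [Fintype n]
  {E : Type*} [NormedAddCommGroup E] [NormedSpace 𝕜 E] {x : E}

theorem HasFDerivAt.matrix_inv [DecidableEq m] {f : E → Matrix m m 𝕜}
    {f' : E →L[𝕜] Matrix m m 𝕜} (hf : HasFDerivAt f f' x) (hx : IsUnit (f x)) :
    HasFDerivAt (fun y => (f y)⁻¹)
      ((-ContinuousLinearMap.mulLeftRight 𝕜 _ (f x)⁻¹ (f x)⁻¹).comp f') x := by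
  have : CompleteSpace (Matrix m m 𝕜) := FiniteDimensional.complete 𝕜 _
  obtain ⟨u, hu⟩ := hx
  have hinv : HasFDerivAt (fun A : Matrix m m 𝕜 => A⁻¹)
      (-ContinuousLinearMap.mulLeftRight 𝕜 _ (f x)⁻¹ (f x)⁻¹) (f x) := by
    simpa only [nonsing_inv_eq_ringInverse, ← hu, Ring.inverse_unit]
      using hasFDerivAt_ringInverse (𝕜 := 𝕜) u
  exact hinv.comp x hf

theorem HasFDerivAt.matrix_mulVec {f : E → Matrix m n 𝕜} {f' : E →L[𝕜] Matrix m n 𝕜}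
    (hf : HasFDerivAt f f' x) (v : n → 𝕜) :
    HasFDerivAt (fun y => f y *ᵥ v)
      (((mulVecBilin 𝕜 𝕜).flip v).toContinuousLinearMap.comp f') x := by
  exact ((mulVecBilin 𝕜 𝕜).flip v).toContinuousLinearMap.hasFDerivAt.comp x hf

end Calculus

namespace Matrix

variable {m : Type*} [Fintype m] [DecidableEq m]

theorem diagonal_mulVec_eq_mul {α : Type*} [NonUnitalNonAssocSemiring α] (d u : m → α) :
    diagonal d *ᵥ u = d * u :=
  funext (mulVec_diagonal d u)

variable {K : Type*} [Field K]

theorem inv_diagonal_mul_diagonal_mulVec {d : m → K} (hd : ∀ i, d i ≠ 0) (u : m → K) :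
    (diagonal d)⁻¹ * diagonal (diagonal d *ᵥ u) = diagonal u := by
  have hinv : (diagonal d)⁻¹ = diagonal d⁻¹ :=
    inv_eq_left_inv (by rw [diagonal_mul_diagonal']; simp [inv_mul_cancel₀ (hd _)])
  rw [hinv, diagonal_mulVec_eq_mul, diagonal_mul_diagonal']
  congr 1
  funext i
  simp [inv_mul_cancel_left₀ (hd i)]

theorem mul_inv_mul_diagonal_mul_inv_mulVec (P A B : Matrix m m K) {θ : m → K}
    (hθ : ∀ i, θ i ≠ 1) (h v : m → K) :
    (P * (A⁻¹ * (B * diagonal h * diagonal θ) * A⁻¹)) *ᵥ v =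
      (P * A⁻¹ * B * diagonal θ * (1 - diagonal θ)⁻¹ *
        diagonal (((1 - diagonal θ) * A⁻¹) *ᵥ v)) *ᵥ h := by
  have hΘ : 1 - diagonal θ = diagonal (1 - θ) := by rw [← diagonal_one, diagonal_sub]; rfl
  have hd : ∀ i, (1 - θ) i ≠ 0 := fun i => sub_ne_zero.mpr (hθ i).symm
  calc (P * (A⁻¹ * (B * diagonal h * diagonal θ) * A⁻¹)) *ᵥ v
      = (P * A⁻¹ * B) *ᵥ (diagonal h *ᵥ (diagonal θ *ᵥ (A⁻¹ *ᵥ v))) := by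
        simp only [mulVec_mulVec, Matrix.mul_assoc]
    _ = (P * A⁻¹ * B * diagonal θ * diagonal (A⁻¹ *ᵥ v)) *ᵥ h := by
        simp only [← mulVec_mulVec, diagonal_mulVec_eq_mul]
        ring_nf
    _ = _ := by
        rw [Matrix.mul_assoc (P * A⁻¹ * B * diagonal θ), hΘ, ← mulVec_mulVec v (diagonal (1 - θ)),
          inv_diagonal_mul_diagonal_mulVec hd]

end Matrix

theorem one_sub_Wmat_transpose_mul_diagonal {n : ℕ} (C : Matrix (Fin n) (Fin n) ℝ)
    (θ y : Fin n → ℝ) :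
    1 - (Wmat C y)ᵀ * diagonal θ = 1 - Cᵀ * diagonal θ - (1 - Cᵀ) * diagonal y * diagonal θ := by
  simp only [Wmat, transpose_add, transpose_mul, transpose_sub, transpose_one, diagonal_transpose]
  noncomm_ring

theorem hasFDerivAt_one_sub_Wmat_transpose_mul_diagonal {n : ℕ} (C : Matrix (Fin n) (Fin n) ℝ)
    (θ x : Fin n → ℝ) :
    HasFDerivAt (fun y => 1 - (Wmat C y)ᵀ * diagonal θ)
      (-(ContinuousLinearMap.mulLeftRight ℝ _ (1 - Cᵀ) (diagonal θ)).comp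
        (diagonalLinearMap (Fin n) ℝ ℝ).toContinuousLinearMap) x := by
  simp_rw [one_sub_Wmat_transpose_mul_diagonal]
  exact ((ContinuousLinearMap.mulLeftRight ℝ _ (1 - Cᵀ) (diagonal θ)).comp
    (diagonalLinearMap (Fin n) ℝ ℝ).toContinuousLinearMap).hasFDerivAt.const_sub _

theorem stmt3_general (n : ℕ) (C : Matrix (Fin n) (Fin n) ℝ)
    (θ : Fin n → ℝ) (hθ1 : ∀ i, θ i < 1)
    (x : Fin n → ℝ) (hx : IsUnit (1 - (Wmat C x)ᵀ * Matrix.diagonal θ)) :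
    HasFDerivAt (Fmap C θ)
      (LinearMap.toContinuousLinearMap (Matrix.toLin'
        ((1 - Matrix.diagonal θ) * (1 - (Wmat C x)ᵀ * Matrix.diagonal θ)⁻¹ *
          (1 - Cᵀ) * Matrix.diagonal θ * (1 - Matrix.diagonal θ)⁻¹ *
          Matrix.diagonal (Fmap C θ x)))) x := by
  have hF := (((hasFDerivAt_one_sub_Wmat_transpose_mul_diagonal C θ x).matrix_inv hx).const_mul
    (1 - diagonal θ)).matrix_mulVec (fun _ => 1 / (n : ℝ))
  refine hF.congr_fderiv (ContinuousLinearMap.ext fun h => ?_)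
  set A := 1 - (Wmat C x)ᵀ * diagonal θ
  change ((1 - diagonal θ) * -(A⁻¹ * -((1 - Cᵀ) * diagonal h * diagonal θ) * A⁻¹)) *ᵥ _ = _
  simp only [mul_neg, neg_mul, neg_neg]
  exact mul_inv_mul_diagonal_mul_inv_mulVec _ _ _ (fun i => (hθ1 i).ne) h _

theorem stmt3 (n : ℕ) (hn : 2 ≤ n) (C : Matrix (Fin n) (Fin n) ℝ)
    (hCnonneg : ∀ i j, 0 ≤ C i j) (hCrow : ∀ i, ∑ j, C i j = 1)
    (hCdiag : ∀ i, C i i = 0)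
    (θ : Fin n → ℝ) (hθ0 : ∀ i, 0 ≤ θ i) (hθ1 : ∀ i, θ i < 1) (hθex : ∃ j, 0 < θ j)
    (x : Fin n → ℝ) (hx : IsUnit (1 - (Wmat C x)ᵀ * Matrix.diagonal θ)) :
    HasFDerivAt (Fmap C θ)
      (LinearMap.toContinuousLinearMap (Matrix.toLin'
        ((1 - Matrix.diagonal θ) * (1 - (Wmat C x)ᵀ * Matrix.diagonal θ)⁻¹ *
          (1 - Cᵀ) * Matrix.diagonal θ * (1 - Matrix.diagonal θ)⁻¹ *
          Matrix.diagonal (Fmap C θ x)))) x :=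
  stmt3_general n C θ hθ1 x hx
end

section
/- If θ_max < n/(n + 2(1 + ζ)), then F is a contraction on Δ_n with respect to the ℓ¹ norm: for all y, z ∈ Δ_n, ‖F(y) − F(z)‖₁ ≤ κ‖y − z‖₁, where κ = 2θ_max(1 + ζ)/(n(1 − θ_max)) and κ < 1. -/
set_option linter.unusedSectionVars false
open Matrix

lemma sol_nonneg {n : ℕ} (B : Matrix (Fin n) (Fin n) ℝ)
    (hB : ∀ i j, 0 ≤ B i j) (hrow : ∀ i, ∑ j, B i j < 1)
    (x b : Fin n → ℝ) (hb : ∀ i, 0 ≤ b i)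
    (hx : (1 - B) *ᵥ x = b) : ∀ i, 0 ≤ x i := by
  have hx' : ∀ k, x k = b k + ∑ j, B k j * x j := by
    intro k
    have h := congrFun hx k
    rw [Matrix.sub_mulVec, Matrix.one_mulVec] at h
    have h2 : x k - (B *ᵥ x) k = b k := h
    simp only [Matrix.mulVec, dotProduct] at h2
    linarith
  intro i
  obtain ⟨m, -, hm⟩ := Finset.exists_min_image Finset.univ x ⟨i, Finset.mem_univ i⟩
  have hmin : ∀ j, x m ≤ x j := fun j => hm j (Finset.mem_univ j)
  have h1 : (∑ j, B m j) * x m ≤ ∑ j, B m j * x j := by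
    rw [Finset.sum_mul]
    exact Finset.sum_le_sum fun j _ => mul_le_mul_of_nonneg_left (hmin j) (hB m j)
  have h2 : x m = b m + ∑ j, B m j * x j := hx' m
  have h3 : 0 ≤ x m := by nlinarith [hb m, hrow m]
  exact le_trans h3 (hmin i)

lemma oneSubUnit {n : ℕ} (B : Matrix (Fin n) (Fin n) ℝ)
    (hB : ∀ i j, 0 ≤ B i j) (hrow : ∀ i, ∑ j, B i j < 1) :
    IsUnit (1 - B).det := by
  rw [isUnit_iff_ne_zero]
  intro hdet
  obtain ⟨v, hv, hmv⟩ := (Matrix.exists_mulVec_eq_zero_iff).2 hdet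
  have h1 : ∀ i, 0 ≤ v i := sol_nonneg B hB hrow v 0 (fun _ => le_refl 0) hmv
  have h2 : ∀ i, 0 ≤ (-v) i := by
    apply sol_nonneg B hB hrow (-v) 0 (fun _ => le_refl 0)
    rw [Matrix.mulVec_neg, hmv]; simp
  apply hv
  funext i
  have h2i := h2 i
  simp only [Pi.neg_apply, neg_nonneg] at h2i
  have : v i = 0 := le_antisymm h2i (h1 i)
  simpa using this

lemma oneSubInvNonneg {n : ℕ} (B : Matrix (Fin n) (Fin n) ℝ)
    (hB : ∀ i j, 0 ≤ B i j) (hrow : ∀ i, ∑ j, B i j < 1) :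
    ∀ i j, 0 ≤ (1 - B)⁻¹ i j := by
  intro i j
  have hdet := oneSubUnit B hB hrow
  apply sol_nonneg B hB hrow (fun k => (1 - B)⁻¹ k j)
    (fun k => (1 : Matrix (Fin n) (Fin n) ℝ) k j)
    (fun k => by by_cases h : k = j <;> simp [Matrix.one_apply, h]) ?_ i
  funext k
  simp only [Matrix.mulVec, dotProduct]
  rw [show ∑ l, (1 - B) k l * (1 - B)⁻¹ l j = ((1 - B) * (1 - B)⁻¹) k j from (Matrix.mul_apply).symm,
    Matrix.mul_nonsing_inv _ hdet]


section aux
variable {n : ℕ} (C : Matrix (Fin n) (Fin n) ℝ) (θ x : Fin n → ℝ)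

lemma Wmat_apply (i j : Fin n) :
    Wmat C x i j = (if i = j then x i else 0) + (1 - x i) * C i j := by
  have h1 : (1 - Matrix.diagonal x : Matrix (Fin n) (Fin n) ℝ)
      = Matrix.diagonal (fun i => 1 - x i) := by
    rw [← Matrix.diagonal_one, ← Matrix.diagonal_sub]
  rw [Wmat, Matrix.add_apply, h1, Matrix.diagonal_mul, Matrix.diagonal_apply]

variable (hCnonneg : ∀ i j, 0 ≤ C i j) (hCrow : ∀ i, ∑ j, C i j = 1)
  (hx : x ∈ simplex n)

include hx in
lemma x_le_one : ∀ i, x i ≤ 1 := by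
  intro i
  rw [← hx.2]
  exact Finset.single_le_sum (fun j _ => hx.1 j) (Finset.mem_univ i)

include hCnonneg hx in
lemma Wmat_nonneg : ∀ i j, 0 ≤ Wmat C x i j := by
  intro i j
  rw [Wmat_apply]
  have h1 := hx.1 i
  have h2 := x_le_one x hx i
  have := hCnonneg i j
  by_cases h : i = j
  · subst h
    rw [if_pos rfl]
    nlinarith
  · simp only [if_neg h, zero_add]; nlinarith

include hCrow in
omit hx in
lemma Wmat_rowsum : ∀ i, ∑ j, Wmat C x i j = 1 := by
  intro i
  simp only [Wmat_apply]
  rw [Finset.sum_add_distrib, Finset.sum_ite_eq Finset.univ i (fun _ => x i)]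
  rw [← Finset.mul_sum, hCrow i]
  simp

end aux

section main
variable {n : ℕ} (C : Matrix (Fin n) (Fin n) ℝ) (θ x : Fin n → ℝ)

/-- `M(x) = I - W(x)ᵀ Θ` -/
noncomputable def Mm : Matrix (Fin n) (Fin n) ℝ := 1 - (Wmat C x)ᵀ * Matrix.diagonal θ

/-- `u(x) = M(x)⁻¹ (1/n) 1` -/
noncomputable def uvec : Fin n → ℝ := (Mm C θ x)⁻¹ *ᵥ (fun _ => 1 / (n : ℝ))

lemma Mm_transpose : Mm C θ x = (1 - Matrix.diagonal θ * Wmat C x)ᵀ := by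
  rw [Matrix.transpose_sub, Matrix.transpose_one, Matrix.transpose_mul,
    Matrix.diagonal_transpose, Mm]

variable (hCnonneg : ∀ i j, 0 ≤ C i j) (hCrow : ∀ i, ∑ j, C i j = 1)
  (hθ0 : ∀ i, 0 ≤ θ i) (hθ1 : ∀ i, θ i < 1) (hx : x ∈ simplex n)

include hCnonneg hθ0 hx in
lemma B_nonneg : ∀ i j, 0 ≤ (Matrix.diagonal θ * Wmat C x) i j := by
  intro i j
  rw [Matrix.diagonal_mul]
  exact mul_nonneg (hθ0 i) (Wmat_nonneg C x hCnonneg hx i j)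

include hCrow hθ0 hθ1 hx in
lemma B_rowsum : ∀ i, ∑ j, (Matrix.diagonal θ * Wmat C x) i j < 1 := by
  intro i
  simp only [Matrix.diagonal_mul]
  rw [← Finset.mul_sum, Wmat_rowsum C x hCrow, mul_one]
  exact hθ1 i

include hCnonneg hCrow hθ0 hθ1 hx in
lemma Mdet : IsUnit (Mm C θ x).det := by
  rw [Mm_transpose, Matrix.det_transpose]
  exact oneSubUnit _ (B_nonneg C θ x hCnonneg hθ0 hx) (B_rowsum C θ x hCrow hθ0 hθ1 hx)

include hCnonneg hCrow hθ0 hθ1 hx in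
lemma Minv_nonneg : ∀ i j, 0 ≤ (Mm C θ x)⁻¹ i j := by
  intro i j
  rw [Mm_transpose, ← Matrix.transpose_nonsing_inv, Matrix.transpose_apply]
  exact oneSubInvNonneg _ (B_nonneg C θ x hCnonneg hθ0 hx)
    (B_rowsum C θ x hCrow hθ0 hθ1 hx) j i

include hCnonneg hCrow hθ0 hθ1 hx in
lemma uvec_nonneg : ∀ i, 0 ≤ uvec C θ x i := by
  intro i
  have h := Minv_nonneg C θ x hCnonneg hCrow hθ0 hθ1 hx
  simp only [uvec, Matrix.mulVec, dotProduct]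
  exact Finset.sum_nonneg fun j _ => mul_nonneg (h i j) (by positivity)

include hCnonneg hCrow hθ0 hθ1 hx in
lemma uvec_fixed : Mm C θ x *ᵥ uvec C θ x = fun _ => 1 / (n : ℝ) := by
  rw [uvec, Matrix.mulVec_mulVec, Matrix.mul_nonsing_inv _ (Mdet C θ x hCnonneg hCrow hθ0 hθ1 hx),
    Matrix.one_mulVec]

include hCnonneg hCrow hθ0 hθ1 hx in
lemma uvec_eq : ∀ i, uvec C θ x i = 1 / (n : ℝ) + ∑ j, Wmat C x j i * θ j * uvec C θ x j := by
  intro i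
  have h := congrFun (uvec_fixed C θ x hCnonneg hCrow hθ0 hθ1 hx) i
  rw [Mm, Matrix.sub_mulVec, Matrix.one_mulVec] at h
  have h2 : (((Wmat C x)ᵀ * Matrix.diagonal θ) *ᵥ uvec C θ x) i
      = ∑ j, Wmat C x j i * θ j * uvec C θ x j := by
    simp only [Matrix.mulVec, dotProduct, Matrix.mul_diagonal, Matrix.transpose_apply]
  have h3 : uvec C θ x i - (((Wmat C x)ᵀ * Matrix.diagonal θ) *ᵥ uvec C θ x) i = 1 / (n:ℝ) := h
  rw [h2] at h3
  linarith

include hCnonneg hCrow hθ0 hθ1 hx in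
lemma uvec_lb : ∀ i, 1 / (n : ℝ) ≤ uvec C θ x i := by
  intro i
  rw [uvec_eq C θ x hCnonneg hCrow hθ0 hθ1 hx i]
  have : 0 ≤ ∑ j, Wmat C x j i * θ j * uvec C θ x j :=
    Finset.sum_nonneg fun j _ => mul_nonneg
      (mul_nonneg (Wmat_nonneg C x hCnonneg hx j i) (hθ0 j))
      (uvec_nonneg C θ x hCnonneg hCrow hθ0 hθ1 hx j)
  linarith


lemma oneSubDiag : (1 - Matrix.diagonal θ : Matrix (Fin n) (Fin n) ℝ)
    = Matrix.diagonal (fun i => 1 - θ i) := by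
  rw [← Matrix.diagonal_one, ← Matrix.diagonal_sub]

include hCnonneg hCrow hθ0 hθ1 hx in
lemma Fmap_eq : ∀ i, Fmap C θ x i = (1 - θ i) * uvec C θ x i := by
  intro i
  have : Fmap C θ x = (1 - Matrix.diagonal θ) *ᵥ uvec C θ x := by
    rw [Fmap, uvec, Matrix.mulVec_mulVec]
    rfl
  rw [this, oneSubDiag, Matrix.mulVec_diagonal]

include hCnonneg hCrow hθ0 hθ1 hx in
lemma Fmap_sum (hn : 0 < (n : ℝ)) : ∑ i, Fmap C θ x i = 1 := by
  have husum : ∑ i, uvec C θ x i = 1 + ∑ j, θ j * uvec C θ x j := by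
    calc ∑ i, uvec C θ x i
        = ∑ i, (1 / (n : ℝ) + ∑ j, Wmat C x j i * θ j * uvec C θ x j) :=
          Finset.sum_congr rfl fun i _ => uvec_eq C θ x hCnonneg hCrow hθ0 hθ1 hx i
      _ = ∑ _i : Fin n, (1 / (n : ℝ)) + ∑ i, ∑ j, Wmat C x j i * θ j * uvec C θ x j := by
          rw [Finset.sum_add_distrib]
      _ = 1 + ∑ j, θ j * uvec C θ x j := by
          congr 1
          · rw [Finset.sum_const, Finset.card_univ, Fintype.card_fin, nsmul_eq_mul]
            field_simp
          · rw [Finset.sum_comm]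
            refine Finset.sum_congr rfl fun j _ => ?_
            simp only [mul_assoc]
            rw [← Finset.sum_mul, Wmat_rowsum C x hCrow j, one_mul]
  have : ∑ i, Fmap C θ x i = ∑ i, (1 - θ i) * uvec C θ x i :=
    Finset.sum_congr rfl fun i _ => Fmap_eq C θ x hCnonneg hCrow hθ0 hθ1 hx i
  rw [this]
  have hexp : ∀ i, (1 - θ i) * uvec C θ x i = uvec C θ x i - θ i * uvec C θ x i :=
    fun i => by ring
  simp only [hexp]
  rw [Finset.sum_sub_distrib, husum]
  ring

include hCnonneg hCrow hθ0 hθ1 hx in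
lemma Fmap_nonneg : ∀ i, 0 ≤ Fmap C θ x i := by
  intro i
  rw [Fmap_eq C θ x hCnonneg hCrow hθ0 hθ1 hx i]
  exact mul_nonneg (by linarith [hθ1 i]) (uvec_nonneg C θ x hCnonneg hCrow hθ0 hθ1 hx i)

include hCnonneg hCrow hθ0 hθ1 hx in
lemma Fmap_ub (hn : 0 < (n : ℝ)) :
    ∀ i, Fmap C θ x i ≤ (1 + (∑ j, θ j) - θ i) / n := by
  intro i
  have hsum := Fmap_sum C θ x hCnonneg hCrow hθ0 hθ1 hx hn
  have hsplit : Fmap C θ x i + ∑ j ∈ Finset.univ.erase i, Fmap C θ x j = 1 := by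
    rw [Finset.add_sum_erase Finset.univ _ (Finset.mem_univ i)]
    exact hsum
  have hlb : ∀ j, (1 - θ j) / n ≤ Fmap C θ x j := by
    intro j
    rw [Fmap_eq C θ x hCnonneg hCrow hθ0 hθ1 hx j]
    have h1 : 0 ≤ 1 - θ j := by linarith [hθ1 j]
    have := uvec_lb C θ x hCnonneg hCrow hθ0 hθ1 hx j
    calc (1 - θ j) / n = (1 - θ j) * (1 / n) := by ring
      _ ≤ (1 - θ j) * uvec C θ x j := mul_le_mul_of_nonneg_left this h1
  have h2 : ∑ j ∈ Finset.univ.erase i, (1 - θ j) / (n : ℝ)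
      ≤ ∑ j ∈ Finset.univ.erase i, Fmap C θ x j :=
    Finset.sum_le_sum fun j _ => hlb j
  have h3 : ∑ j ∈ Finset.univ.erase i, (1 - θ j) / (n : ℝ)
      = ((n : ℝ) - 1 - ((∑ j, θ j) - θ i)) / n := by
    rw [← Finset.sum_div]
    congr 1
    rw [Finset.sum_sub_distrib, Finset.sum_const, Finset.card_erase_of_mem (Finset.mem_univ i),
      Finset.card_univ, Fintype.card_fin, Finset.sum_erase_eq_sub (Finset.mem_univ i)]
    have hn1 : 1 ≤ n := Nat.one_le_iff_ne_zero.mpr (by rintro rfl; simp at hn)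
    rw [nsmul_eq_mul, mul_one, Nat.cast_sub hn1]
    push_cast
    ring
  rw [h3] at h2
  have hne : (n : ℝ) ≠ 0 := ne_of_gt hn
  have : (1 + (∑ j, θ j) - θ i) / (n:ℝ) = 1 - ((n : ℝ) - 1 - ((∑ j, θ j) - θ i)) / n := by
    field_simp
    ring
  rw [this]
  linarith

include hCnonneg hCrow hθ0 hθ1 hx in
lemma Pcol : ∀ j, ∑ i, ((1 - Matrix.diagonal θ) * (Mm C θ x)⁻¹) i j = 1 := by
  intro j
  have hdet := Mdet C θ x hCnonneg hCrow hθ0 hθ1 hx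
  set o : Fin n → ℝ := fun _ => 1 with ho
  have h1 : o ᵥ* Mm C θ x = fun j => 1 - θ j := by
    funext k
    simp only [Matrix.vecMul, dotProduct, ho, one_mul, Mm, Matrix.sub_apply,
      Matrix.mul_diagonal, Matrix.transpose_apply]
    rw [Finset.sum_sub_distrib]
    congr 1
    · simp [Matrix.one_apply]
    · rw [← Finset.sum_mul, Wmat_rowsum C x hCrow k, one_mul]
  have h2 : o ᵥ* (1 - Matrix.diagonal θ) = fun j => 1 - θ j := by
    funext k
    rw [oneSubDiag, Matrix.vecMul_diagonal]
    simp [ho]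
  have h4 : o ᵥ* ((1 - Matrix.diagonal θ) * (Mm C θ x)⁻¹) = o := by
    rw [← Matrix.vecMul_vecMul, h2, ← h1, Matrix.vecMul_vecMul,
      Matrix.mul_nonsing_inv _ hdet, Matrix.vecMul_one]
  have h5 := congrFun h4 j
  simp only [Matrix.vecMul, dotProduct, ho, one_mul] at h5
  exact h5

end main

theorem stmt6 (n : ℕ) (hn : 2 ≤ n) (C : Matrix (Fin n) (Fin n) ℝ)
    (hCnonneg : ∀ i j, 0 ≤ C i j) (hCrow : ∀ i, ∑ j, C i j = 1)
    (hCdiag : ∀ i, C i i = 0)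
    (θ : Fin n → ℝ) (hθ0 : ∀ i, 0 ≤ θ i) (hθ1 : ∀ i, θ i < 1) (hθex : ∃ j, 0 < θ j)
    (θmin θmax θave ζ κ : ℝ)
    (hθmin : IsLeast (Set.range θ) θmin) (hθmax : IsGreatest (Set.range θ) θmax)
    (hθave : θave = (∑ i, θ i) / n) (hζ : ζ = n * θave - θmin)
    (hκ : κ = 2 * θmax * (1 + ζ) / (n * (1 - θmax)))
    (hcond : θmax < n / (n + 2 * (1 + ζ))) :
    κ < 1 ∧
    ∀ y ∈ simplex n, ∀ z ∈ simplex n,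
      ∑ i, |Fmap C θ y i - Fmap C θ z i| ≤ κ * ∑ i, |y i - z i| := by
  have hn0 : (0:ℝ) < n := by
    have : 0 < n := by omega
    exact_mod_cast this
  obtain ⟨jmin, hjmin⟩ := hθmin.1
  obtain ⟨jmax, hjmax⟩ := hθmax.1
  have hθmax1 : θmax < 1 := hjmax ▸ hθ1 jmax
  have hθmax0 : 0 ≤ θmax := hjmax ▸ hθ0 jmax
  have hθle : ∀ i, θ i ≤ θmax := fun i => hθmax.2 ⟨i, rfl⟩
  have hθge : ∀ i, θmin ≤ θ i := fun i => hθmin.2 ⟨i, rfl⟩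
  have hζeq : ζ = (∑ i, θ i) - θmin := by
    rw [hζ, hθave]
    field_simp
  have hζ0 : 0 ≤ ζ := by
    rw [hζeq]
    have h1 : θ jmin ≤ ∑ i, θ i :=
      Finset.single_le_sum (fun i _ => hθ0 i) (Finset.mem_univ jmin)
    rw [hjmin] at h1
    linarith
  have hden : 0 < (n:ℝ) + 2*(1+ζ) := by linarith
  have hmain : θmax * ((n:ℝ) + 2*(1+ζ)) < n := (lt_div_iff₀ hden).1 hcond
  have hκlt : κ < 1 := by
    rw [hκ, div_lt_one (by nlinarith : 0 < (n:ℝ)*(1-θmax))]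
    nlinarith
  refine ⟨hκlt, ?_⟩
  intro y hy z hz
  have hMdety := Mdet C θ y hCnonneg hCrow hθ0 hθ1 hy
  set uy := uvec C θ y with huy
  set uz := uvec C θ z with huz
  set My := Mm C θ y with hMy
  set Mz := Mm C θ z with hMz
  set D := (Wmat C y - Wmat C z)ᵀ * Matrix.diagonal θ with hD
  set e := D *ᵥ uz with he
  have hMzMy : Mz - My = D := by
    rw [hMy, hMz, hD, Mm, Mm, Matrix.transpose_sub, Matrix.sub_mul]
    abel
  have claim1 : My *ᵥ (uy - uz) = e := by
    have h1 : My *ᵥ uy = fun _ => 1/(n:ℝ) := uvec_fixed C θ y hCnonneg hCrow hθ0 hθ1 hy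
    have h2 : Mz *ᵥ uz = fun _ => 1/(n:ℝ) := uvec_fixed C θ z hCnonneg hCrow hθ0 hθ1 hz
    have h3 : My *ᵥ uz = (fun _ => 1/(n:ℝ)) - e := by
      have hMyD : My = Mz - D := by rw [← hMzMy]; abel
      rw [hMyD, Matrix.sub_mulVec, h2, he]
    rw [Matrix.mulVec_sub, h1, h3]
    funext i
    simp
  have claim2 : uy - uz = My⁻¹ *ᵥ e := by
    rw [← claim1, Matrix.mulVec_mulVec, Matrix.nonsing_inv_mul _ hMdety, Matrix.one_mulVec]
  set P := (1 - Matrix.diagonal θ) * My⁻¹ with hP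
  have hP0 : ∀ i j, 0 ≤ P i j := by
    intro i j
    rw [hP, oneSubDiag, Matrix.diagonal_mul]
    exact mul_nonneg (by linarith [hθ1 i]) (Minv_nonneg C θ y hCnonneg hCrow hθ0 hθ1 hy i j)
  have hPcol := Pcol C θ y hCnonneg hCrow hθ0 hθ1 hy
  have hPe : ∀ i, ∑ j, P i j * e j = (1 - θ i) * (My⁻¹ *ᵥ e) i := by
    intro i
    have h1 : (P *ᵥ e) i = ∑ j, P i j * e j := by simp [Matrix.mulVec, dotProduct]
    rw [← h1, hP, ← Matrix.mulVec_mulVec, oneSubDiag, Matrix.mulVec_diagonal]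
  have hFdiff : ∀ i, Fmap C θ y i - Fmap C θ z i = ∑ j, P i j * e j := by
    intro i
    rw [Fmap_eq C θ y hCnonneg hCrow hθ0 hθ1 hy i, Fmap_eq C θ z hCnonneg hCrow hθ0 hθ1 hz i,
      hPe i, ← huy, ← huz]
    have : uy i - uz i = (uy - uz) i := rfl
    rw [show (1 - θ i) * uy i - (1 - θ i) * uz i = (1 - θ i) * ((uy - uz) i) by
      rw [Pi.sub_apply]; ring, claim2]
  have huz0 : ∀ i, 0 ≤ uz i := uvec_nonneg C θ z hCnonneg hCrow hθ0 hθ1 hz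
  have hEbound : ∀ j, |e j| ≤
      ∑ i, |y i - z i| * (((if i = j then 1 else 0) + C i j) * (θ i * uz i)) := by
    intro j
    have hej : e j = ∑ i, (y i - z i) * (((if i = j then 1 else 0) - C i j) * (θ i * uz i)) := by
      rw [he]
      simp only [Matrix.mulVec, dotProduct, hD, Matrix.mul_diagonal,
        Matrix.transpose_apply, Matrix.sub_apply]
      refine Finset.sum_congr rfl fun i _ => ?_
      rw [Wmat_apply, Wmat_apply]
      by_cases hij : i = j
      · subst hij; simp; ring
      · simp only [if_neg hij]; ring
    rw [hej]
    refine (Finset.abs_sum_le_sum_abs _ _).trans (Finset.sum_le_sum fun i _ => ?_)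
    rw [abs_mul, abs_mul]
    have hθu : 0 ≤ θ i * uz i := mul_nonneg (hθ0 i) (huz0 i)
    rw [abs_of_nonneg hθu]
    refine mul_le_mul_of_nonneg_left (mul_le_mul_of_nonneg_right ?_ hθu) (abs_nonneg _)
    by_cases hij : i = j
    · subst hij
      rw [if_pos rfl, hCdiag i]
      simp
    · rw [if_neg hij, zero_sub, abs_neg, abs_of_nonneg (hCnonneg i j), zero_add]
  have step1 : ∑ i, |Fmap C θ y i - Fmap C θ z i| ≤ ∑ j, |e j| := by
    calc ∑ i, |Fmap C θ y i - Fmap C θ z i| = ∑ i, |∑ j, P i j * e j| := by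
          simp only [hFdiff]
      _ ≤ ∑ i, ∑ j, |P i j * e j| :=
          Finset.sum_le_sum fun i _ => Finset.abs_sum_le_sum_abs _ _
      _ = ∑ j, ∑ i, P i j * |e j| := by
          rw [Finset.sum_comm]
          exact Finset.sum_congr rfl fun j _ => Finset.sum_congr rfl fun i _ => by
            rw [abs_mul, abs_of_nonneg (hP0 i j)]
      _ = ∑ j, |e j| := by
          refine Finset.sum_congr rfl fun j _ => ?_
          rw [← Finset.sum_mul, hPcol j, one_mul]
  have step2 : ∑ j, |e j| ≤ ∑ i, |y i - z i| * (2 * (θ i * uz i)) := by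
    calc ∑ j, |e j|
        ≤ ∑ j, ∑ i, |y i - z i| * (((if i = j then 1 else 0) + C i j) * (θ i * uz i)) :=
          Finset.sum_le_sum fun j _ => hEbound j
      _ = ∑ i, ∑ j, |y i - z i| * (((if i = j then 1 else 0) + C i j) * (θ i * uz i)) :=
          Finset.sum_comm
      _ = ∑ i, |y i - z i| * (2 * (θ i * uz i)) := by
          refine Finset.sum_congr rfl fun i _ => ?_
          have hterm : ∀ j, |y i - z i| * (((if i = j then 1 else 0) + C i j) * (θ i * uz i))
              = ((if i = j then 1 else 0) + C i j) * (|y i - z i| * (θ i * uz i)) :=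
            fun j => by ring
          simp only [hterm]
          rw [← Finset.sum_mul]
          have hsum2 : ∑ j, ((if i = j then 1 else 0) + C i j) = 2 := by
            rw [Finset.sum_add_distrib, Finset.sum_ite_eq Finset.univ i (fun _ => (1:ℝ)),
              hCrow i]
            simp
            norm_num
          rw [hsum2]
          ring
  have final : ∑ i, |y i - z i| * (2 * (θ i * uz i)) ≤ κ * ∑ i, |y i - z i| := by
    rw [Finset.mul_sum]
    refine Finset.sum_le_sum fun i _ => ?_
    have h2κ : 2 * (θ i * uz i) ≤ κ := by
      rw [hκ]
      have hpos : 0 < (n:ℝ)*(1-θmax) := by nlinarith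
      rw [le_div_iff₀ hpos]
      have hub : (1-θ i) * uz i ≤ (1+ζ)/n := by
        have h := Fmap_ub C θ z hCnonneg hCrow hθ0 hθ1 hz hn0 i
        rw [Fmap_eq C θ z hCnonneg hCrow hθ0 hθ1 hz i, ← huz] at h
        refine h.trans ((div_le_div_iff_of_pos_right hn0).mpr ?_)
        rw [hζeq]
        linarith [hθge i]
      have hub' : (1-θ i) * uz i * n ≤ 1+ζ := (le_div_iff₀ hn0).mp hub
      have hint1 := mul_le_mul_of_nonneg_left hub' hθmax0
      have hint2 : 0 ≤ uz i * n * (θmax - θ i) :=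
        mul_nonneg (mul_nonneg (huz0 i) hn0.le) (sub_nonneg.2 (hθle i))
      nlinarith [hint1, hint2]
    calc |y i - z i| * (2*(θ i * uz i)) ≤ |y i - z i| * κ :=
        mul_le_mul_of_nonneg_left h2κ (abs_nonneg _)
      _ = κ * |y i - z i| := mul_comm _ _
  exact le_trans (le_trans step1 step2) final
end

section
/- If θ_max < n/(n + 2(1 + ζ)), then every trajectory of the iteration x(s+1) = F(x(s)) with x(0) ∈ Δ_n converges exponentially fast to the unique fixed point x* of F in Δ_n; in fact ‖x(s) − x*‖₁ ≤ κ^s ‖x(0) − x*‖₁ for all s ≥ 0, where κ = 2θ_max(1 + ζ)/(n(1 − θ_max)) < 1. -/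
open Matrix
open Filter Topology

section aux
variable {n : ℕ}

lemma aux_col (hn : 0 < n) (θ : Fin n → ℝ) (hθ0 : ∀ i, 0 ≤ θ i) (hθ1 : ∀ i, θ i < 1)
    (W : Matrix (Fin n) (Fin n) ℝ) (hW0 : ∀ i j, 0 ≤ W i j) (hWrow : ∀ i, ∑ j, W i j = 1)
    (u : Fin n → ℝ) (j : Fin n)
    (hu : ∀ k, u k = (if k = j then (1:ℝ) else 0) + θ k * ∑ l, W k l * u l) :
    (∀ k, 0 ≤ u k) ∧ (∀ k, u k ≤ u j) ∧ (1 - θ j) * u j ≤ 1 ∧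
      (∀ k, k ≠ j → u k ≤ θ k * u j) := by
  have : Nonempty (Fin n) := ⟨⟨0, hn⟩⟩
  have hne : (Finset.univ : Finset (Fin n)).Nonempty := Finset.univ_nonempty
  -- nonnegativity
  have h0 : ∀ k, 0 ≤ u k := by
    by_contra hcon
    push_neg at hcon
    obtain ⟨k0, _, hmin⟩ := Finset.exists_min_image Finset.univ u hne
    have hminle : ∀ l, u k0 ≤ u l := fun l => hmin l (Finset.mem_univ l)
    have hk0 : u k0 < 0 := by
      obtain ⟨k, hk⟩ := hcon
      exact lt_of_le_of_lt (hminle k) hk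
    set S := ∑ l, W k0 l * u l with hS
    have hSm : u k0 ≤ S := by
      calc u k0 = ∑ l, W k0 l * u k0 := by rw [← Finset.sum_mul, hWrow, one_mul]
      _ ≤ S := Finset.sum_le_sum fun l _ => mul_le_mul_of_nonneg_left (hminle l) (hW0 k0 l)
    rcases le_or_gt 0 S with hS0 | hS0
    · have hd : (0:ℝ) ≤ if k0 = j then (1:ℝ) else 0 := by split <;> norm_num
      have : 0 ≤ u k0 := by rw [hu k0]; nlinarith [hθ0 k0]
      linarith
    · have h1 : S < θ k0 * S := by
        nlinarith [mul_pos (sub_pos.mpr (hθ1 k0)) (neg_pos.mpr hS0)]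
      have hd : (0:ℝ) ≤ if k0 = j then (1:ℝ) else 0 := by split <;> norm_num
      have h2 : u k0 ≥ θ k0 * S := by rw [hu k0]; linarith
      linarith
  -- max at j
  have hSle : ∀ k M, (∀ l, u l ≤ M) → ∑ l, W k l * u l ≤ M := by
    intro k M hM
    calc ∑ l, W k l * u l ≤ ∑ l, W k l * M :=
      Finset.sum_le_sum fun l _ => mul_le_mul_of_nonneg_left (hM l) (hW0 k l)
    _ = M := by rw [← Finset.sum_mul, hWrow, one_mul]
  have hj1 : 1 ≤ u j := by
    rw [hu j, if_pos rfl]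
    have h1 : 0 ≤ ∑ l, W j l * u l := Finset.sum_nonneg fun l _ => mul_nonneg (hW0 j l) (h0 l)
    nlinarith [hθ0 j]
  have hmax : ∀ k, u k ≤ u j := by
    obtain ⟨k1, _, hmax⟩ := Finset.exists_max_image Finset.univ u hne
    have hmaxle : ∀ l, u l ≤ u k1 := fun l => hmax l (Finset.mem_univ l)
    intro k
    rcases eq_or_ne k1 j with rfl | hne1
    · exact hmaxle k
    · exfalso
      have hk1 : u k1 = θ k1 * ∑ l, W k1 l * u l := by
        rw [hu k1, if_neg hne1, zero_add]
      have h2 : ∑ l, W k1 l * u l ≤ u k1 := hSle k1 _ hmaxle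
      have h3 : 0 < u k1 := lt_of_lt_of_le one_pos (le_trans hj1 (hmaxle j))
      nlinarith [hθ0 k1, hθ1 k1]
  refine ⟨h0, hmax, ?_, ?_⟩
  · have hle := hSle j (u j) hmax
    have hj := hu j
    rw [if_pos rfl] at hj
    nlinarith [mul_le_mul_of_nonneg_left hle (hθ0 j)]
  · intro k hk
    have hk' : u k = θ k * ∑ l, W k l * u l := by rw [hu k, if_neg hk, zero_add]
    have := hSle k (u j) hmax
    nlinarith [hθ0 k]


lemma aux_Wmat_apply (C : Matrix (Fin n) (Fin n) ℝ) (x : Fin n → ℝ) (i j : Fin n) :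
    Wmat C x i j = (if i = j then x i else 0) + (1 - x i) * C i j := by
  have h1 : (1 : Matrix (Fin n) (Fin n) ℝ) - Matrix.diagonal x
      = Matrix.diagonal (fun i => 1 - x i) := by
    ext a b
    rcases eq_or_ne a b with rfl | hab
    · simp [Matrix.one_apply, Matrix.diagonal_apply]
    · simp [Matrix.one_apply_ne hab, Matrix.diagonal_apply_ne _ hab]
  rw [Wmat, h1, Matrix.add_apply, Matrix.diagonal_mul, Matrix.diagonal_apply]

lemma aux_W_props (C : Matrix (Fin n) (Fin n) ℝ) (hC0 : ∀ i j, 0 ≤ C i j)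
    (hCrow : ∀ i, ∑ j, C i j = 1) (x : Fin n → ℝ) (hx : x ∈ simplex n) :
    (∀ i j, 0 ≤ Wmat C x i j) ∧ (∀ i, ∑ j, Wmat C x i j = 1) := by
  obtain ⟨hx0, hx1⟩ := hx
  have hxle : ∀ i, x i ≤ 1 := by
    intro i
    calc x i ≤ ∑ j, x j := Finset.single_le_sum (fun j _ => hx0 j) (Finset.mem_univ i)
    _ = 1 := hx1
  constructor
  · intro i j
    rw [aux_Wmat_apply]
    have h1 : 0 ≤ (1 - x i) * C i j := mul_nonneg (by linarith [hxle i]) (hC0 i j)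
    split <;> [linarith [hx0 i]; linarith]
  · intro i
    simp only [aux_Wmat_apply]
    rw [Finset.sum_add_distrib, Finset.sum_ite_eq Finset.univ i (fun _ => x i)]
    rw [← Finset.mul_sum, hCrow]
    simp

end aux

section aux2
variable {n : ℕ}

noncomputable def Amat (C : Matrix (Fin n) (Fin n) ℝ) (θ x : Fin n → ℝ) :
    Matrix (Fin n) (Fin n) ℝ := 1 - Matrix.diagonal θ * Wmat C x

noncomputable def Pmat (C : Matrix (Fin n) (Fin n) ℝ) (θ x : Fin n → ℝ) :
    Matrix (Fin n) (Fin n) ℝ := (Amat C θ x)⁻¹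

lemma aux_Amat_apply (C : Matrix (Fin n) (Fin n) ℝ) (θ x : Fin n → ℝ) (k l : Fin n) :
    Amat C θ x k l = (if k = l then (1:ℝ) else 0) - θ k * Wmat C x k l := by
  rw [Amat, Matrix.sub_apply, Matrix.diagonal_mul, Matrix.one_apply]

lemma aux_Adet (C : Matrix (Fin n) (Fin n) ℝ) (θ : Fin n → ℝ)
    (hθ0 : ∀ i, 0 ≤ θ i) (hθ1 : ∀ i, θ i < 1) (x : Fin n → ℝ)
    (hW0 : ∀ i j, 0 ≤ Wmat C x i j) (hWrow : ∀ i, ∑ j, Wmat C x i j = 1) :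
    IsUnit (Amat C θ x).det := by
  set W := Wmat C x
  have hWle : ∀ k, W k k ≤ 1 := by
    intro k
    calc W k k ≤ ∑ j, W k j := Finset.single_le_sum (fun j _ => hW0 k j) (Finset.mem_univ k)
    _ = 1 := hWrow k
  refine isUnit_iff_ne_zero.mpr (det_ne_zero_of_sum_row_lt_diag ?_)
  intro k
  have h1 : ∑ j ∈ Finset.univ.erase k, ‖Amat C θ x k j‖ = θ k * (1 - W k k) := by
    have he : ∀ j ∈ Finset.univ.erase k, ‖Amat C θ x k j‖ = θ k * W k j := by
      intro j hj
      have hjk : k ≠ j := fun h => (Finset.mem_erase.mp hj).1 h.symm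
      rw [aux_Amat_apply, if_neg hjk, zero_sub, Real.norm_eq_abs, abs_neg,
        abs_of_nonneg (mul_nonneg (hθ0 k) (hW0 k j))]
    rw [Finset.sum_congr rfl he, ← Finset.mul_sum,
      Finset.sum_erase_eq_sub (Finset.mem_univ k), hWrow k]
  have h2 : ‖Amat C θ x k k‖ = 1 - θ k * W k k := by
    rw [aux_Amat_apply, if_pos rfl, Real.norm_eq_abs, abs_of_nonneg]
    nlinarith [hθ0 k, hθ1 k, hW0 k k, hWle k]
  rw [h1, h2]
  nlinarith [hθ0 k, hθ1 k, hW0 k k, hWle k]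

end aux2

section aux3
variable {n : ℕ}

lemma aux_master (hn : 0 < n) (C : Matrix (Fin n) (Fin n) ℝ)
    (hC0 : ∀ i j, 0 ≤ C i j) (hCrow : ∀ i, ∑ j, C i j = 1)
    (θ : Fin n → ℝ) (hθ0 : ∀ i, 0 ≤ θ i) (hθ1 : ∀ i, θ i < 1)
    (x : Fin n → ℝ) (hx : x ∈ simplex n) :
    (∀ i j, 0 ≤ Pmat C θ x i j) ∧
    (∀ k j, Pmat C θ x k j ≤ Pmat C θ x j j) ∧
    (∀ j, (1 - θ j) * Pmat C θ x j j ≤ 1) ∧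
    (∀ k j, k ≠ j → Pmat C θ x k j ≤ θ k * Pmat C θ x j j) ∧
    (∀ k, ∑ i, (1 - θ i) * Pmat C θ x k i = 1) ∧
    (∀ j, Fmap C θ x j = (1 - θ j) * ((n:ℝ)⁻¹ * ∑ i, Pmat C θ x i j)) := by
  obtain ⟨hW0, hWrow⟩ := aux_W_props C hC0 hCrow x hx
  have hAdet := aux_Adet C θ hθ0 hθ1 x hW0 hWrow
  set W := Wmat C x with hWdef
  set A := Amat C θ x with hAdef
  set P := Pmat C θ x with hPdef
  have hAP : A * P = 1 := Matrix.mul_nonsing_inv A hAdet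
  have hPA : P * A = 1 := Matrix.nonsing_inv_mul A hAdet
  -- the column equations
  have hcol : ∀ j k, P k j = (if k = j then (1:ℝ) else 0) + θ k * ∑ l, W k l * P l j := by
    intro j k
    have h2 := congrFun (congrFun hAP k) j
    rw [Matrix.mul_apply] at h2
    have h3 : ∀ l, A k l * P l j
        = (if k = l then P l j else 0) - θ k * (W k l * P l j) := by
      intro l
      rw [hAdef, aux_Amat_apply, sub_mul, ite_mul, one_mul, zero_mul, mul_assoc]
    rw [Finset.sum_congr rfl (fun l _ => h3 l), Finset.sum_sub_distrib,
      Finset.sum_ite_eq Finset.univ k (fun l => P l j), ← Finset.mul_sum] at h2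
    simp only [Finset.mem_univ, if_true] at h2
    rw [Matrix.one_apply] at h2
    linarith [h2]
  have hcolu : ∀ j, (∀ k, 0 ≤ P k j) ∧ (∀ k, P k j ≤ P j j) ∧ (1 - θ j) * P j j ≤ 1 ∧
      (∀ k, k ≠ j → P k j ≤ θ k * P j j) := by
    intro j
    exact aux_col hn θ hθ0 hθ1 W hW0 hWrow (fun k => P k j) j (fun k => hcol j k)
  -- row sums against (1 - θ)
  have hrowA : ∀ i, ∑ l, A i l = 1 - θ i := by
    intro i
    simp only [hAdef, aux_Amat_apply]
    rw [Finset.sum_sub_distrib, Finset.sum_ite_eq Finset.univ i (fun _ => (1:ℝ)),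
      ← Finset.mul_sum, hWrow]
    simp
  have hProw : ∀ k, ∑ i, (1 - θ i) * P k i = 1 := by
    intro k
    have h1 : ∀ i, (1 - θ i) * P k i = P k i * ∑ l, A i l := by
      intro i; rw [hrowA i, mul_comm]
    rw [Finset.sum_congr rfl (fun i _ => h1 i)]
    have h2 : ∑ i, P k i * ∑ l, A i l = ∑ l, (P * A) k l := by
      simp_rw [Finset.mul_sum, Matrix.mul_apply]
      exact Finset.sum_comm
    rw [h2, hPA]
    simp [Matrix.one_apply]
  -- Fmap formula
  have hT : (1 - (Wmat C x)ᵀ * Matrix.diagonal θ)⁻¹ = Pᵀ := by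
    have h1 : (1 - (Wmat C x)ᵀ * Matrix.diagonal θ) = Aᵀ := by
      rw [hAdef, Amat, Matrix.transpose_sub, Matrix.transpose_one, Matrix.transpose_mul,
        Matrix.diagonal_transpose]
    rw [h1, ← Matrix.transpose_nonsing_inv, hPdef, Pmat]
  have hFapp : ∀ j, Fmap C θ x j = (1 - θ j) * ((n:ℝ)⁻¹ * ∑ i, P i j) := by
    intro j
    rw [Fmap, hT, Matrix.mulVec, dotProduct]
    have h1 : ∀ i, ((1 - Matrix.diagonal θ) * Pᵀ) j i = (1 - θ j) * P i j := by
      intro i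
      have hd : (1 : Matrix (Fin n) (Fin n) ℝ) - Matrix.diagonal θ
          = Matrix.diagonal (fun i => 1 - θ i) := by
        ext a b
        rcases eq_or_ne a b with rfl | hab
        · simp [Matrix.one_apply, Matrix.diagonal_apply]
        · simp [Matrix.one_apply_ne hab, Matrix.diagonal_apply_ne _ hab]
      rw [hd, Matrix.diagonal_mul, Matrix.transpose_apply]
    rw [Finset.sum_congr rfl (fun i _ => by rw [h1 i])]
    rw [← Finset.sum_mul, ← Finset.mul_sum, one_div]
    ring
  exact ⟨fun i j => (hcolu j).1 i, fun k j => (hcolu j).2.1 k, fun j => (hcolu j).2.2.1,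
    fun k j h => (hcolu j).2.2.2 k h, hProw, hFapp⟩

end aux3

section aux4
variable {n : ℕ}

lemma aux_F (hn : 0 < n) (C : Matrix (Fin n) (Fin n) ℝ)
    (hC0 : ∀ i j, 0 ≤ C i j) (hCrow : ∀ i, ∑ j, C i j = 1)
    (θ : Fin n → ℝ) (hθ0 : ∀ i, 0 ≤ θ i) (hθ1 : ∀ i, θ i < 1)
    (x : Fin n → ℝ) (hx : x ∈ simplex n) :
    Fmap C θ x ∈ simplex n ∧
    (∀ j, Fmap C θ x j ≤ ((n:ℝ))⁻¹ * (1 + (∑ i, θ i) - θ j)) := by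
  obtain ⟨hP0, hPmax, hPdiag, hPoff, hProw, hFapp⟩ :=
    aux_master hn C hC0 hCrow θ hθ0 hθ1 x hx
  set P := Pmat C θ x
  have hn' : (0:ℝ) < (n:ℝ) := by exact_mod_cast hn
  have hF0 : ∀ j, 0 ≤ Fmap C θ x j := by
    intro j
    rw [hFapp j]
    have h1 : 0 ≤ ∑ i, P i j := Finset.sum_nonneg fun i _ => hP0 i j
    have h2 := hθ1 j
    exact mul_nonneg (by linarith) (by positivity)
  have hFsum : ∑ j, Fmap C θ x j = 1 := by
    rw [Finset.sum_congr rfl (fun j _ => hFapp j)]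
    have h1 : ∀ j, (1 - θ j) * ((n:ℝ)⁻¹ * ∑ i, P i j)
        = (n:ℝ)⁻¹ * ∑ i, (1 - θ j) * P i j := by
      intro j
      simp only [Finset.mul_sum]
      exact Finset.sum_congr rfl fun i _ => by ring
    rw [Finset.sum_congr rfl (fun j _ => h1 j), ← Finset.mul_sum, Finset.sum_comm]
    rw [Finset.sum_congr rfl (fun i (_ : i ∈ Finset.univ) => hProw i)]
    simp [mul_comm, mul_inv_cancel₀ (ne_of_gt hn')]
  refine ⟨⟨hF0, hFsum⟩, ?_⟩
  intro j
  rw [hFapp j]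
  have h1 : ∑ i ∈ Finset.univ.erase j, P i j ≤ (∑ i ∈ Finset.univ.erase j, θ i) * P j j := by
    rw [Finset.sum_mul]
    refine Finset.sum_le_sum fun i hi => ?_
    exact hPoff i j (Finset.mem_erase.mp hi).1
  have h2 : ∑ i, P i j = P j j + ∑ i ∈ Finset.univ.erase j, P i j := by
    rw [← Finset.add_sum_erase Finset.univ _ (Finset.mem_univ j)]
  have h3 : ∑ i ∈ Finset.univ.erase j, θ i = (∑ i, θ i) - θ j := by
    rw [Finset.sum_erase_eq_sub (Finset.mem_univ j)]
  have h4 : 0 ≤ (∑ i, θ i) - θ j := by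
    rw [← h3]; exact Finset.sum_nonneg fun i _ => hθ0 i
  have h5 : (1 - θ j) * ∑ i, P i j ≤ 1 + (∑ i, θ i) - θ j := by
    have h6 : (1 - θ j) * ∑ i, P i j
        ≤ ((1 - θ j) * P j j) * (1 + ((∑ i, θ i) - θ j)) := by
      rw [h3] at h1
      rw [h2]
      nlinarith [mul_le_mul_of_nonneg_left h1 (sub_nonneg.mpr (hθ1 j).le)]
    have h7 : ((1 - θ j) * P j j) * (1 + ((∑ i, θ i) - θ j)) ≤ 1 + ((∑ i, θ i) - θ j) := by
      nlinarith [mul_nonneg (sub_nonneg.mpr (hPdiag j))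
        (show (0:ℝ) ≤ 1 + ((∑ i, θ i) - θ j) by linarith)]
    linarith
  calc (1 - θ j) * ((n:ℝ)⁻¹ * ∑ i, P i j) = (n:ℝ)⁻¹ * ((1 - θ j) * ∑ i, P i j) := by ring
  _ ≤ (n:ℝ)⁻¹ * (1 + (∑ i, θ i) - θ j) := by
      refine mul_le_mul_of_nonneg_left ?_ (by positivity)
      linarith [h5]

end aux4

section aux5
variable {n : ℕ}

lemma aux_contract (hn : 0 < n) (C : Matrix (Fin n) (Fin n) ℝ)
    (hC0 : ∀ i j, 0 ≤ C i j) (hCrow : ∀ i, ∑ j, C i j = 1)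
    (θ : Fin n → ℝ) (hθ0 : ∀ i, 0 ≤ θ i) (hθ1 : ∀ i, θ i < 1)
    (x y : Fin n → ℝ) (hx : x ∈ simplex n) (hy : y ∈ simplex n)
    (wB : ℝ)
    (hwB : ∀ j, θ j * ((n:ℝ)⁻¹ * ∑ i, Pmat C θ y i j) ≤ wB) :
    ∑ i, |Fmap C θ x i - Fmap C θ y i| ≤ 2 * wB * ∑ i, |x i - y i| := by
  obtain ⟨hWx0, hWxrow⟩ := aux_W_props C hC0 hCrow x hx
  obtain ⟨hWy0, hWyrow⟩ := aux_W_props C hC0 hCrow y hy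
  have hAdx := aux_Adet C θ hθ0 hθ1 x hWx0 hWxrow
  have hAdy := aux_Adet C θ hθ0 hθ1 y hWy0 hWyrow
  obtain ⟨hPx0, -, -, -, hPxrow, -⟩ := aux_master hn C hC0 hCrow θ hθ0 hθ1 x hx
  obtain ⟨hPy0, -, -, -, -, -⟩ := aux_master hn C hC0 hCrow θ hθ0 hθ1 y hy
  set Θm := Matrix.diagonal θ with hΘm
  set Px := Pmat C θ x with hPx
  set Py := Pmat C θ y with hPy
  set v : Fin n → ℝ := fun _ => 1 / (n : ℝ) with hv
  have hdiagsub : (1 : Matrix (Fin n) (Fin n) ℝ) - Θm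
      = Matrix.diagonal (fun i => 1 - θ i) := by
    ext a b
    rcases eq_or_ne a b with rfl | hab
    · simp [hΘm, Matrix.one_apply, Matrix.diagonal_apply]
    · simp [hΘm, Matrix.one_apply_ne hab, Matrix.diagonal_apply_ne _ hab]
  -- transposed inverse identities
  have hTx : (1 - (Wmat C x)ᵀ * Θm) = (Amat C θ x)ᵀ := by
    rw [Amat, Matrix.transpose_sub, Matrix.transpose_one, Matrix.transpose_mul,
      Matrix.diagonal_transpose]
  have hTy : (1 - (Wmat C y)ᵀ * Θm) = (Amat C θ y)ᵀ := by
    rw [Amat, Matrix.transpose_sub, Matrix.transpose_one, Matrix.transpose_mul,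
      Matrix.diagonal_transpose]
  have hTxinv : (1 - (Wmat C x)ᵀ * Θm)⁻¹ = Pxᵀ := by
    rw [hTx, ← Matrix.transpose_nonsing_inv, hPx, Pmat]
  have hTyinv : (1 - (Wmat C y)ᵀ * Θm)⁻¹ = Pyᵀ := by
    rw [hTy, ← Matrix.transpose_nonsing_inv, hPy, Pmat]
  have hxinv1 : Pxᵀ * (Amat C θ x)ᵀ = 1 := by
    rw [← Matrix.transpose_mul, hPx, Pmat, Matrix.mul_nonsing_inv _ hAdx,
      Matrix.transpose_one]
  have hyinv2 : (Amat C θ y)ᵀ * Pyᵀ = 1 := by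
    rw [← Matrix.transpose_mul, hPy, Pmat, Matrix.nonsing_inv_mul _ hAdy,
      Matrix.transpose_one]
  -- resolvent identity
  have h9 : ((Wmat C x)ᵀ - (Wmat C y)ᵀ) * Θm = (Amat C θ y)ᵀ - (Amat C θ x)ᵀ := by
    rw [← hTx, ← hTy]
    noncomm_ring
  have hres : Pxᵀ - Pyᵀ = Pxᵀ * ((((Wmat C x)ᵀ - (Wmat C y)ᵀ) * Θm) * Pyᵀ) := by
    rw [h9]
    calc Pxᵀ - Pyᵀ = Pxᵀ * ((Amat C θ y)ᵀ * Pyᵀ) - (Pxᵀ * (Amat C θ x)ᵀ) * Pyᵀ := by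
          rw [hyinv2, hxinv1, mul_one, one_mul]
    _ = Pxᵀ * (((Amat C θ y)ᵀ - (Amat C θ x)ᵀ) * Pyᵀ) := by noncomm_ring
  -- pointwise difference formula
  set Nm : Matrix (Fin n) (Fin n) ℝ := (Wmat C x)ᵀ - (Wmat C y)ᵀ with hNm
  set w : Fin n → ℝ := (Θm * Pyᵀ).mulVec v with hw
  set z : Fin n → ℝ := Nm.mulVec w with hz
  have hFd : ∀ i, Fmap C θ x i - Fmap C θ y i = ∑ k, (1 - θ i) * (Px k i * z k) := by
    intro i
    have h1 : Fmap C θ x i - Fmap C θ y i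
        = (((1 - Θm) * (Pxᵀ - Pyᵀ)).mulVec v) i := by
      rw [Fmap, Fmap, hTxinv, hTyinv, Matrix.mul_sub, Matrix.sub_mulVec]
      rfl
    rw [h1, hres]
    have h2 : (1 - Θm) * (Pxᵀ * (Nm * Θm * Pyᵀ)) = ((1 - Θm) * Pxᵀ) * (Nm * (Θm * Pyᵀ)) := by
      noncomm_ring
    rw [show Pxᵀ * (Nm * Θm * Pyᵀ) = Pxᵀ * ((Nm * Θm) * Pyᵀ) from rfl]
    rw [h2, ← Matrix.mulVec_mulVec v ((1 - Θm) * Pxᵀ) (Nm * (Θm * Pyᵀ)),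
      ← Matrix.mulVec_mulVec v Nm (Θm * Pyᵀ), ← hw, ← hz]
    rw [Matrix.mulVec, dotProduct]
    refine Finset.sum_congr rfl fun k _ => ?_
    rw [hdiagsub, Matrix.diagonal_mul, Matrix.transpose_apply, mul_assoc]
  -- w formula and nonnegativity
  have hwf : ∀ j, w j = θ j * ((n:ℝ)⁻¹ * ∑ i, Py i j) := by
    intro j
    rw [hw, Matrix.mulVec, dotProduct]
    have h1 : ∀ i, (Θm * Pyᵀ) j i * v i = θ j * (Py i j * (1/(n:ℝ))) := by
      intro i
      rw [hΘm, Matrix.diagonal_mul, Matrix.transpose_apply, hv, mul_assoc]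
    rw [Finset.sum_congr rfl fun i _ => h1 i, ← Finset.mul_sum, ← Finset.sum_mul, one_div]
    ring
  have hw0 : ∀ j, 0 ≤ w j := by
    intro j
    rw [hwf j]
    have h1 : 0 ≤ ∑ i, Py i j := Finset.sum_nonneg fun i _ => hPy0 i j
    exact mul_nonneg (hθ0 j) (by positivity)
  have hwle : ∀ j, w j ≤ wB := by intro j; rw [hwf j]; exact hwB j
  have hwB0 : 0 ≤ wB := le_trans (hw0 ⟨0, hn⟩) (hwle ⟨0, hn⟩)
  -- N column bound
  have hNcol : ∀ j, ∑ k, |Nm k j| ≤ 2 * |x j - y j| := by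
    intro j
    have h1 : ∀ k, |Nm k j| ≤ |x j - y j| * ((if j = k then (1:ℝ) else 0) + C j k) := by
      intro k
      rw [hNm, Matrix.sub_apply, Matrix.transpose_apply, Matrix.transpose_apply,
        aux_Wmat_apply, aux_Wmat_apply]
      have h2 : ((if j = k then x j else 0) + (1 - x j) * C j k)
          - ((if j = k then y j else 0) + (1 - y j) * C j k)
          = (x j - y j) * ((if j = k then (1:ℝ) else 0) - C j k) := by
        split <;> ring
      rw [h2, abs_mul]
      refine mul_le_mul_of_nonneg_left ?_ (abs_nonneg _)
      have h3 : (0:ℝ) ≤ if j = k then (1:ℝ) else 0 := by split <;> norm_num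
      have := abs_sub_abs_le_abs_sub (if j = k then (1:ℝ) else 0) (C j k)
      calc |(if j = k then (1:ℝ) else 0) - C j k|
          ≤ |if j = k then (1:ℝ) else 0| + |C j k| := abs_sub _ _
      _ = (if j = k then (1:ℝ) else 0) + C j k := by
          rw [abs_of_nonneg h3, abs_of_nonneg (hC0 j k)]
    calc ∑ k, |Nm k j| ≤ ∑ k, |x j - y j| * ((if j = k then (1:ℝ) else 0) + C j k) :=
      Finset.sum_le_sum fun k _ => h1 k
    _ = |x j - y j| * ∑ k, ((if j = k then (1:ℝ) else 0) + C j k) := by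
        rw [Finset.mul_sum]
    _ = |x j - y j| * 2 := by
        rw [Finset.sum_add_distrib, Finset.sum_ite_eq Finset.univ j (fun _ => (1:ℝ)),
          hCrow j]
        norm_num
    _ = 2 * |x j - y j| := by ring
  -- main chain
  calc ∑ i, |Fmap C θ x i - Fmap C θ y i|
      ≤ ∑ i, ∑ k, (1 - θ i) * (Px k i * |z k|) := by
        refine Finset.sum_le_sum fun i _ => ?_
        rw [hFd i]
        refine le_trans (Finset.abs_sum_le_sum_abs _ _) (Finset.sum_le_sum fun k _ => ?_)
        rw [abs_mul, abs_mul, abs_of_nonneg (by linarith [hθ1 i] : (0:ℝ) ≤ 1 - θ i),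
          abs_of_nonneg (hPx0 k i)]
  _ = ∑ k, |z k| * ∑ i, (1 - θ i) * Px k i := by
        rw [Finset.sum_comm]
        refine Finset.sum_congr rfl fun k _ => ?_
        rw [Finset.mul_sum]
        exact Finset.sum_congr rfl fun i _ => by ring
  _ = ∑ k, |z k| := by
        refine Finset.sum_congr rfl fun k _ => ?_
        rw [hPxrow k, mul_one]
  _ ≤ ∑ k, ∑ j, |Nm k j| * w j := by
        refine Finset.sum_le_sum fun k _ => ?_
        rw [hz, Matrix.mulVec, dotProduct]
        refine le_trans (Finset.abs_sum_le_sum_abs _ _) (Finset.sum_le_sum fun j _ => ?_)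
        rw [abs_mul, abs_of_nonneg (hw0 j)]
  _ = ∑ j, w j * ∑ k, |Nm k j| := by
        rw [Finset.sum_comm]
        refine Finset.sum_congr rfl fun j _ => ?_
        rw [Finset.mul_sum]
        exact Finset.sum_congr rfl fun k _ => by ring
  _ ≤ ∑ j, wB * (2 * |x j - y j|) := by
        refine Finset.sum_le_sum fun j _ => ?_
        exact mul_le_mul (hwle j) (hNcol j) (Finset.sum_nonneg fun k _ => abs_nonneg _) hwB0
  _ = 2 * wB * ∑ i, |x i - y i| := by
        rw [← Finset.mul_sum, ← Finset.mul_sum]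
        ring

end aux5

set_option maxHeartbeats 1000000 in
theorem stmt8 (n : ℕ) (hn : 2 ≤ n) (C : Matrix (Fin n) (Fin n) ℝ)
    (hCnonneg : ∀ i j, 0 ≤ C i j) (hCrow : ∀ i, ∑ j, C i j = 1)
    (hCdiag : ∀ i, C i i = 0)
    (θ : Fin n → ℝ) (hθ0 : ∀ i, 0 ≤ θ i) (hθ1 : ∀ i, θ i < 1) (hθex : ∃ j, 0 < θ j)
    (θmin θmax θave ζ κ : ℝ)
    (hθmin : IsLeast (Set.range θ) θmin) (hθmax : IsGreatest (Set.range θ) θmax)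
    (hθave : θave = (∑ i, θ i) / n) (hζ : ζ = n * θave - θmin)
    (hκ : κ = 2 * θmax * (1 + ζ) / (n * (1 - θmax)))
    (hcond : θmax < n / (n + 2 * (1 + ζ))) :
    κ < 1 ∧
    ∃ xstar ∈ simplex n, Fmap C θ xstar = xstar ∧
      (∀ y ∈ simplex n, Fmap C θ y = y → y = xstar) ∧
      ∀ x : ℕ → Fin n → ℝ, x 0 ∈ simplex n →
        (∀ s, x (s + 1) = Fmap C θ (x s)) →
        ∀ s, ∑ i, |x s i - xstar i| ≤ κ ^ s * ∑ i, |x 0 i - xstar i| := by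
  have hnpos : 0 < n := by omega
  have hn' : (0:ℝ) < (n:ℝ) := by exact_mod_cast hnpos
  obtain ⟨jm, hjm⟩ := hθmax.1
  obtain ⟨jn, hjn⟩ := hθmin.1
  obtain ⟨j0, hj0⟩ := hθex
  have hmaxle : ∀ i, θ i ≤ θmax := fun i => hθmax.2 ⟨i, rfl⟩
  have hminle : ∀ i, θmin ≤ θ i := fun i => hθmin.2 ⟨i, rfl⟩
  have hθmax0 : 0 < θmax := lt_of_lt_of_le hj0 (hmaxle j0)
  have hθmax1 : θmax < 1 := hjm ▸ hθ1 jm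
  have hθmin0 : 0 ≤ θmin := hjn ▸ hθ0 jn
  have hζ' : ζ = (∑ i, θ i) - θmin := by
    rw [hζ, hθave]
    field_simp
  have hζ0 : 0 ≤ ζ := by
    rw [hζ']
    have h1 : θmin ≤ ∑ i, θ i := by
      calc θmin ≤ θ jn := hminle jn
      _ ≤ ∑ i, θ i := Finset.single_le_sum (fun i _ => hθ0 i) (Finset.mem_univ jn)
    linarith
  have hdenom : (0:ℝ) < (n:ℝ) * (1 - θmax) := by
    apply mul_pos hn'
    linarith
  have hcond' : θmax * ((n:ℝ) + 2 * (1 + ζ)) < n := by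
    have h1 : (0:ℝ) < (n:ℝ) + 2 * (1 + ζ) := by linarith
    exact (lt_div_iff₀ h1).mp hcond
  have hκ1 : κ < 1 := by
    rw [hκ, div_lt_one hdenom]
    nlinarith
  have hκ0 : 0 ≤ κ := by
    rw [hκ]
    have h2 : (0:ℝ) ≤ 2 * θmax * (1 + ζ) := by nlinarith
    positivity
  -- uniform bound on Fmap
  have hFbound : ∀ y ∈ simplex n, ∀ j, Fmap C θ y j ≤ (1 + ζ) / n := by
    intro y hy j
    have h1 := (aux_F hnpos C hCnonneg hCrow θ hθ0 hθ1 y hy).2 j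
    have h2 : 1 + (∑ i, θ i) - θ j ≤ 1 + ζ := by
      rw [hζ']
      have := hminle j
      linarith
    calc Fmap C θ y j ≤ ((n:ℝ))⁻¹ * (1 + (∑ i, θ i) - θ j) := h1
    _ ≤ ((n:ℝ))⁻¹ * (1 + ζ) := by
        refine mul_le_mul_of_nonneg_left h2 (by positivity)
    _ = (1 + ζ) / n := by rw [div_eq_inv_mul]
  -- the w-bound
  set wB : ℝ := θmax * (1 + ζ) / ((n:ℝ) * (1 - θmax)) with hwB
  have hκwB : κ = 2 * wB := by rw [hκ, hwB]; ring
  have hwBbound : ∀ y ∈ simplex n, ∀ j,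
      θ j * ((n:ℝ)⁻¹ * ∑ i, Pmat C θ y i j) ≤ wB := by
    intro y hy j
    obtain ⟨hP0, -, -, -, -, hFapp⟩ := aux_master hnpos C hCnonneg hCrow θ hθ0 hθ1 y hy
    set r : ℝ := (n:ℝ)⁻¹ * ∑ i, Pmat C θ y i j with hr
    have hr0 : 0 ≤ r := by
      rw [hr]
      have : 0 ≤ ∑ i, Pmat C θ y i j := Finset.sum_nonneg fun i _ => hP0 i j
      positivity
    have hF : Fmap C θ y j = (1 - θ j) * r := hFapp j
    have hFle : (1 - θ j) * r ≤ (1 + ζ) / n := hF ▸ hFbound y hy j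
    have h1 : θ j * r * (1 - θmax) ≤ θ j * r * (1 - θ j) :=
      mul_le_mul_of_nonneg_left (by linarith [hmaxle j]) (mul_nonneg (hθ0 j) hr0)
    have h2 : θ j * r * (1 - θ j) ≤ θmax * ((1 + ζ) / n) := by
      have h3 : θ j * ((1 - θ j) * r) ≤ θ j * ((1 + ζ) / n) :=
        mul_le_mul_of_nonneg_left hFle (hθ0 j)
      have h4 : θ j * ((1 + ζ) / n) ≤ θmax * ((1 + ζ) / n) :=
        mul_le_mul_of_nonneg_right (hmaxle j) (by positivity)
      nlinarith [h3, h4]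
    have h5 : θ j * r * (1 - θmax) ≤ θmax * (1 + ζ) / n := by
      calc θ j * r * (1 - θmax) ≤ θ j * r * (1 - θ j) := h1
      _ ≤ θmax * ((1 + ζ) / n) := h2
      _ = θmax * (1 + ζ) / n := by ring
    have h6 := mul_le_mul_of_nonneg_right h5 hn'.le
    rw [hwB, le_div_iff₀ hdenom]
    calc θ j * r * ((n:ℝ) * (1 - θmax)) = θ j * r * (1 - θmax) * n := by ring
    _ ≤ θmax * (1 + ζ) / n * n := h6
    _ = θmax * (1 + ζ) := by field_simp
  -- the contraction
  have hcontr : ∀ x ∈ simplex n, ∀ y ∈ simplex n,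
      ∑ i, |Fmap C θ x i - Fmap C θ y i| ≤ κ * ∑ i, |x i - y i| := by
    intro x hx y hy
    have := aux_contract hnpos C hCnonneg hCrow θ hθ0 hθ1 x y hx hy wB (hwBbound y hy)
    calc ∑ i, |Fmap C θ x i - Fmap C θ y i| ≤ 2 * wB * ∑ i, |x i - y i| := this
    _ = κ * ∑ i, |x i - y i| := by rw [hκwB]
  have hmapsto : ∀ x ∈ simplex n, Fmap C θ x ∈ simplex n := fun x hx =>
    (aux_F hnpos C hCnonneg hCrow θ hθ0 hθ1 x hx).1
  -- the iteration
  set x0 : Fin n → ℝ := fun _ => (n:ℝ)⁻¹ with hx0def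
  have hx0 : x0 ∈ simplex n := by
    constructor
    · intro i; rw [hx0def]; positivity
    · show ∑ _i : Fin n, (n:ℝ)⁻¹ = 1
      rw [Finset.sum_const, Finset.card_univ, Fintype.card_fin, nsmul_eq_mul]
      field_simp
  set u : ℕ → Fin n → ℝ := fun s => (Fmap C θ)^[s] x0 with hudef
  have hustep : ∀ s, u (s+1) = Fmap C θ (u s) := by
    intro s
    rw [hudef]
    exact Function.iterate_succ_apply' (Fmap C θ) s x0
  have hus : ∀ s, u s ∈ simplex n := by
    intro s
    induction s with
    | zero => exact hx0
    | succ s ih => rw [hustep s]; exact hmapsto _ ih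
  set c : ℝ := ∑ i, |u 1 i - u 0 i| with hc
  have hgeo : ∀ s, ∑ i, |u (s+1) i - u s i| ≤ κ ^ s * c := by
    intro s
    induction s with
    | zero => simp [hc]
    | succ s ih =>
      calc ∑ i, |u (s+2) i - u (s+1) i|
          = ∑ i, |Fmap C θ (u (s+1)) i - Fmap C θ (u s) i| := by
            rw [hustep (s+1), hustep s]
      _ ≤ κ * ∑ i, |u (s+1) i - u s i| := hcontr _ (hus (s+1)) _ (hus s)
      _ ≤ κ * (κ ^ s * c) := mul_le_mul_of_nonneg_left ih hκ0
      _ = κ ^ (s+1) * c := by ring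
  have hc0 : 0 ≤ c := Finset.sum_nonneg fun i _ => abs_nonneg _
  have hcauchy : CauchySeq u := by
    apply cauchySeq_of_le_geometric κ c hκ1
    intro s
    rw [dist_pi_le_iff (by positivity)]
    intro i
    rw [Real.dist_eq]
    calc |u s i - u (s+1) i| = |u (s+1) i - u s i| := abs_sub_comm _ _
    _ ≤ ∑ i, |u (s+1) i - u s i| :=
        Finset.single_le_sum (f := fun j => |u (s+1) j - u s j|)
          (fun j _ => abs_nonneg _) (Finset.mem_univ i)
    _ ≤ κ ^ s * c := hgeo s
    _ = c * κ ^ s := by ring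
  obtain ⟨xstar, hxstar⟩ := cauchySeq_tendsto_of_complete hcauchy
  have hcoord : ∀ i, Tendsto (fun s => u s i) atTop (𝓝 (xstar i)) := by
    intro i
    exact (tendsto_pi_nhds.mp hxstar) i
  have hd1lim : Tendsto (fun s => ∑ i, |u s i - xstar i|) atTop (𝓝 0) := by
    have h1 : ∀ i : Fin n, Tendsto (fun s => |u s i - xstar i|) atTop (𝓝 0) := by
      intro i
      have h2 : Tendsto (fun s => u s i - xstar i) atTop (𝓝 (xstar i - xstar i)) :=
        (hcoord i).sub tendsto_const_nhds
      rw [sub_self] at h2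
      simpa using h2.abs
    have := tendsto_finset_sum (Finset.univ : Finset (Fin n)) (fun i _ => h1 i)
    simpa using this
  have hxstarS : xstar ∈ simplex n := by
    constructor
    · intro i
      exact ge_of_tendsto (hcoord i) (Eventually.of_forall fun s => (hus s).1 i)
    · have h1 : Tendsto (fun s => ∑ i, u s i) atTop (𝓝 (∑ i, xstar i)) :=
        tendsto_finset_sum _ (fun i _ => hcoord i)
      have h2 : (fun s => ∑ i, u s i) = fun _ => (1:ℝ) := by
        funext s; exact (hus s).2
      rw [h2] at h1
      exact tendsto_nhds_unique h1 tendsto_const_nhds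
  -- xstar is a fixed point
  have hfix : Fmap C θ xstar = xstar := by
    have hsum0 : ∑ i, |Fmap C θ xstar i - xstar i| ≤ 0 := by
      have hb : ∀ s, ∑ i, |Fmap C θ xstar i - xstar i|
          ≤ κ * (∑ i, |xstar i - u s i|) + ∑ i, |u (s+1) i - xstar i| := by
        intro s
        have h1 : ∑ i, |Fmap C θ xstar i - xstar i|
            ≤ (∑ i, |Fmap C θ xstar i - u (s+1) i|) + ∑ i, |u (s+1) i - xstar i| := by
          rw [← Finset.sum_add_distrib]
          refine Finset.sum_le_sum fun i _ => ?_
          exact abs_sub_le _ _ _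
        have h2 : ∑ i, |Fmap C θ xstar i - u (s+1) i| ≤ κ * ∑ i, |xstar i - u s i| := by
          rw [hustep s]
          exact hcontr _ hxstarS _ (hus s)
        linarith
      have hlim : Tendsto (fun s => κ * (∑ i, |xstar i - u s i|) + ∑ i, |u (s+1) i - xstar i|)
          atTop (𝓝 0) := by
        have t1 : Tendsto (fun s => ∑ i, |xstar i - u s i|) atTop (𝓝 0) := by
          have : (fun s => ∑ i, |xstar i - u s i|) = fun s => ∑ i, |u s i - xstar i| := by
            funext s
            exact Finset.sum_congr rfl fun i _ => abs_sub_comm _ _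
          rw [this]; exact hd1lim
        have t2 : Tendsto (fun s => ∑ i, |u (s+1) i - xstar i|) atTop (𝓝 0) :=
          hd1lim.comp (tendsto_add_atTop_nat 1)
        have := (t1.const_mul κ).add t2
        simpa using this
      exact ge_of_tendsto hlim (Eventually.of_forall hb)
    have hsumeq : ∑ i, |Fmap C θ xstar i - xstar i| = 0 :=
      le_antisymm hsum0 (Finset.sum_nonneg fun i _ => abs_nonneg _)
    funext i
    have := (Finset.sum_eq_zero_iff_of_nonneg (fun i _ => abs_nonneg _)).mp hsumeq i
      (Finset.mem_univ i)
    have := abs_eq_zero.mp this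
    linarith [this]
  refine ⟨hκ1, xstar, hxstarS, hfix, ?_, ?_⟩
  · -- uniqueness
    intro y hy hfy
    have h1 : ∑ i, |y i - xstar i| ≤ κ * ∑ i, |y i - xstar i| := by
      have := hcontr y hy xstar hxstarS
      rw [hfy, hfix] at this
      exact this
    have h2 : 0 ≤ ∑ i, |y i - xstar i| := Finset.sum_nonneg fun i _ => abs_nonneg _
    have h3 : ∑ i, |y i - xstar i| = 0 := by nlinarith
    funext i
    have := (Finset.sum_eq_zero_iff_of_nonneg (fun i _ => abs_nonneg _)).mp h3 i
      (Finset.mem_univ i)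
    have := abs_eq_zero.mp this
    linarith [this]
  · -- convergence rate
    intro x hx0' hstep s
    have hxs : ∀ s, x s ∈ simplex n := by
      intro s
      induction s with
      | zero => exact hx0'
      | succ s ih => rw [hstep s]; exact hmapsto _ ih
    induction s with
    | zero => simp
    | succ s ih =>
      calc ∑ i, |x (s+1) i - xstar i| = ∑ i, |Fmap C θ (x s) i - Fmap C θ xstar i| := by
            rw [hstep s, hfix]
      _ ≤ κ * ∑ i, |x s i - xstar i| := hcontr _ (hxs s) _ hxstarS
      _ ≤ κ * (κ ^ s * ∑ i, |x 0 i - xstar i|) := mul_le_mul_of_nonneg_left ih hκ0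
      _ = κ ^ (s+1) * ∑ i, |x 0 i - xstar i| := by ring
end

section
/- Let x* ∈ Δ_n be any fixed point of F. If i and j are both partially stubborn (θ_i > 0 and θ_j > 0), C_ki = C_kj for every partially stubborn k with k ≠ i and k ≠ j, and C_ij = C_ji, then x*_i < x*_j holds if and only if θ_i > θ_j. -/
open Matrix

private lemma quad_mono {a b : ℝ} (h1 : a ≤ b) (h2 : a + b ≤ 1) :
    (1 - a) * a ≤ (1 - b) * b := by nlinarith

private lemma frac_mono {p q : ℝ} (h : p ≤ q) : p * (1 - q) ≤ q * (1 - p) := by nlinarith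

private lemma frac_mono_lt {p q : ℝ} (h : p < q) : p * (1 - q) < q * (1 - p) := by nlinarith

theorem stmt10 (n : ℕ) (hn : 2 ≤ n) (C : Matrix (Fin n) (Fin n) ℝ)
    (hCnonneg : ∀ i j, 0 ≤ C i j) (hCrow : ∀ i, ∑ j, C i j = 1)
    (hCdiag : ∀ i, C i i = 0)
    (θ : Fin n → ℝ) (hθ0 : ∀ i, 0 ≤ θ i) (hθ1 : ∀ i, θ i < 1) (hθex : ∃ j, 0 < θ j)
    (xstar : Fin n → ℝ) (hmem : xstar ∈ simplex n) (hfix : Fmap C θ xstar = xstar)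
    (i j : Fin n) (hi : 0 < θ i) (hj : 0 < θ j)
    (hC : ∀ k, 0 < θ k → k ≠ i → k ≠ j → C k i = C k j)
    (hCij : C i j = C j i) :
    xstar i < xstar j ↔ θ j < θ i := by
  by_cases hij : i = j
  · subst hij; simp
  obtain ⟨hx0, hx1⟩ := hmem
  have hn0 : (0:ℝ) < (n:ℝ) := by positivity
  have hxle1 : ∀ k, xstar k ≤ 1 := by
    intro k
    calc xstar k ≤ ∑ m, xstar m :=
          Finset.single_le_sum (fun m _ => hx0 m) (Finset.mem_univ k)
    _ = 1 := hx1
  set W := Wmat C xstar with hWdef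
  have hWentry : ∀ m k, W m k = (if m = k then xstar m else 0) + (1 - xstar m) * C m k := by
    intro m k
    simp only [hWdef, Wmat, Matrix.add_apply, Matrix.sub_mul, Matrix.one_mul,
      Matrix.sub_apply, Matrix.diagonal_apply, Matrix.diagonal_mul]
    ring
  have hWnn : ∀ m k, 0 ≤ W m k := by
    intro m k
    rw [hWentry]
    have h1 : 0 ≤ (1 - xstar m) * C m k :=
      mul_nonneg (by linarith [hxle1 m]) (hCnonneg m k)
    split <;> [linarith [hx0 m]; linarith]
  have hWrow : ∀ m, ∑ k, W m k = 1 := by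
    intro m
    simp only [hWentry]
    rw [Finset.sum_add_distrib, Finset.sum_ite_eq Finset.univ m (fun _ => xstar m),
      ← Finset.mul_sum, hCrow]
    simp
  set A := (1 : Matrix (Fin n) (Fin n) ℝ) - Wᵀ * Matrix.diagonal θ with hAdef
  -- invertibility of A via its transpose
  have hdet : IsUnit A.det := by
    have hTdet : Aᵀ.det ≠ 0 := by
      rw [Ne, ← Matrix.exists_mulVec_eq_zero_iff]
      rintro ⟨v, hv0, hv⟩
      apply hv0
      obtain ⟨k, -, hk⟩ := Finset.exists_max_image Finset.univ (fun k => |v k|)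
        ⟨⟨0, by omega⟩, Finset.mem_univ _⟩
      have hvk : v k = θ k * ∑ m, W k m * v m := by
        have h0 := congrFun hv k
        simp only [Matrix.mulVec, dotProduct, Matrix.transpose_apply, hAdef,
          Matrix.sub_apply, Matrix.one_apply, Matrix.mul_diagonal,
          sub_mul, ite_mul, one_mul, zero_mul, Pi.zero_apply] at h0
        rw [Finset.sum_sub_distrib, Finset.sum_ite_eq' Finset.univ k v] at h0
        simp only [Finset.mem_univ, if_true, sub_eq_zero] at h0
        rw [h0, Finset.mul_sum]
        apply Finset.sum_congr rfl
        intro m _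
        ring
      have hbound : |v k| ≤ θ k * |v k| := by
        conv_lhs => rw [hvk]
        rw [abs_mul, abs_of_nonneg (hθ0 k)]
        apply mul_le_mul_of_nonneg_left _ (hθ0 k)
        calc |∑ m, W k m * v m| ≤ ∑ m, |W k m * v m| := Finset.abs_sum_le_sum_abs _ _
        _ ≤ ∑ m, W k m * |v k| := by
            apply Finset.sum_le_sum
            intro m _
            rw [abs_mul, abs_of_nonneg (hWnn k m)]
            exact mul_le_mul_of_nonneg_left (hk m (Finset.mem_univ m)) (hWnn k m)
        _ = |v k| := by rw [← Finset.sum_mul, hWrow, one_mul]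
      have hvk0 : |v k| ≤ 0 := by nlinarith [hθ1 k, abs_nonneg (v k), hvk, hbound]
      funext m
      have := hk m (Finset.mem_univ m)
      have : |v m| ≤ 0 := le_trans this hvk0
      simpa using le_antisymm this (abs_nonneg _)
    rw [isUnit_iff_ne_zero]
    intro h
    apply hTdet
    rw [Matrix.det_transpose, h]
  -- derive the componentwise fixed-point equations
  set u : Fin n → ℝ := fun k => xstar k / (1 - θ k) with hudef
  set y : Fin n → ℝ := fun k => θ k * u k with hydef
  have hu : ∀ k, u k = xstar k / (1 - θ k) := fun _ => rfl
  have hy : ∀ k, y k = θ k * u k := fun _ => rfl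
  have hθsub : ∀ k, 0 < 1 - θ k := fun k => by linarith [hθ1 k]
  have hAinv : A⁻¹.mulVec (fun _ => 1/(n:ℝ)) = u := by
    have hfix' : (1 - Matrix.diagonal θ).mulVec (A⁻¹.mulVec (fun _ => 1/(n:ℝ))) = xstar := by
      rw [Matrix.mulVec_mulVec]
      exact hfix
    funext k
    have h1 := congrFun hfix' k
    simp only [Matrix.mulVec, dotProduct, Matrix.sub_apply, Matrix.one_apply,
      Matrix.diagonal_apply, sub_mul, ite_mul, one_mul, zero_mul] at h1
    rw [Finset.sum_sub_distrib, Finset.sum_ite_eq Finset.univ k, Finset.sum_ite_eq Finset.univ k]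
      at h1
    simp only [Finset.mem_univ, if_true] at h1
    have h2 : (1 - θ k) * (A⁻¹.mulVec (fun _ => 1/(n:ℝ))) k = xstar k := by
      show (1 - θ k) * ∑ x, A⁻¹ k x * (1/(n:ℝ)) = xstar k
      rw [sub_mul, one_mul]
      exact h1
    rw [hu k, eq_div_iff (hθsub k).ne']
    linear_combination h2
  have hkey : ∀ k, u k - xstar k * y k - ∑ m, (1 - xstar m) * C m k * y m = 1/(n:ℝ) := by
    intro k
    have hAu : A.mulVec u = (fun _ => 1/(n:ℝ)) := by
      rw [← hAinv, Matrix.mulVec_mulVec, Matrix.mul_nonsing_inv A hdet]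
      simp [Matrix.one_mulVec]
    have hk := congrFun hAu k
    simp only [Matrix.mulVec, dotProduct, hAdef, Matrix.sub_apply, Matrix.one_apply,
      Matrix.mul_diagonal, Matrix.transpose_apply, sub_mul, ite_mul, one_mul, zero_mul] at hk
    rw [Finset.sum_sub_distrib, Finset.sum_ite_eq Finset.univ k] at hk
    simp only [Finset.mem_univ, if_true] at hk
    have hsplit : ∑ m, W m k * θ m * u m
        = xstar k * y k + ∑ m, (1 - xstar m) * C m k * y m := by
      have hterm : ∀ m, W m k * θ m * u m
          = (if m = k then xstar m * y m else 0) + (1 - xstar m) * C m k * y m := by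
        intro m
        rw [hWentry, hy m]
        by_cases hmk : m = k
        · subst hmk; simp only [if_true]; ring
        · simp only [hmk, if_false]; ring
      simp_rw [hterm]
      rw [Finset.sum_add_distrib, Finset.sum_ite_eq' Finset.univ k (fun m => xstar m * y m)]
      simp only [Finset.mem_univ, if_true]
    rw [hsplit] at hk
    linarith [hk]
  -- positivity of xstar
  have hSnn : ∀ k, 0 ≤ ∑ m, (1 - xstar m) * C m k * y m := by
    intro k
    apply Finset.sum_nonneg
    intro m _
    have hym : 0 ≤ y m := by
      rw [hy m, hu m]
      exact mul_nonneg (hθ0 m) (div_nonneg (hx0 m) (le_of_lt (hθsub m)))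
    exact mul_nonneg (mul_nonneg (by linarith [hxle1 m]) (hCnonneg m k)) hym
  have hxpos : ∀ k, 0 < xstar k := by
    intro k
    rcases lt_or_eq_of_le (hx0 k) with h | h
    · exact h
    exfalso
    have hk := hkey k
    have hu0 : u k = 0 := by rw [hu k, ← h, zero_div]
    have hy0 : y k = 0 := by rw [hy k, hu0, mul_zero]
    rw [hu0, hy0, mul_zero] at hk
    have hS := hSnn k
    have hpos : (0:ℝ) < 1/(n:ℝ) := by positivity
    linarith
  -- the useful reformulation  u k - x k * y k = x k + (1 - x k) * y k
  have huy : ∀ k, u k - xstar k * y k = xstar k + (1 - xstar k) * y k := by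
    intro k
    have hne := (hθsub k).ne'
    apply mul_right_cancel₀ hne
    rw [hy k, hu k]
    field_simp
    ring
  -- the pairwise equation
  have hpair : xstar i + (1 + C i j) * (1 - xstar i) * y i
      = xstar j + (1 + C i j) * (1 - xstar j) * y j := by
    have hi' := hkey i
    have hj' := hkey j
    have hdiff : ∑ m, ((1 - xstar m) * C m i * y m - (1 - xstar m) * C m j * y m)
        = ∑ m ∈ ({i, j} : Finset (Fin n)),
            ((1 - xstar m) * C m i * y m - (1 - xstar m) * C m j * y m) := by
      symm
      apply Finset.sum_subset (Finset.subset_univ _)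
      intro m _ hm
      simp only [Finset.mem_insert, Finset.mem_singleton, not_or] at hm
      rcases lt_or_eq_of_le (hθ0 m) with hθm | hθm
      · rw [hC m hθm hm.1 hm.2]; ring
      · have hy0 : y m = 0 := by rw [hy m, ← hθm, zero_mul]
        rw [hy0]; ring
    rw [Finset.sum_pair hij, Finset.sum_sub_distrib, hCdiag i, hCdiag j, ← hCij] at hdiff
    have hui := huy i
    have huj := huy j
    linear_combination huj - hui + hi' - hj' + hdiff
  -- final algebra
  have hij_sum : xstar i + xstar j ≤ 1 := by
    have h := Finset.sum_le_sum_of_subset_of_nonneg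
      (Finset.subset_univ ({i, j} : Finset (Fin n))) (fun m _ _ => hx0 m)
    rw [Finset.sum_pair hij, hx1] at h
    exact h
  have hyi2 : (1 - θ i) * y i = θ i * xstar i := by
    rw [hy i, hu i]
    field_simp [(hθsub i).ne']
  have hyj2 : (1 - θ j) * y j = θ j * xstar j := by
    rw [hy j, hu j]
    field_simp [(hθsub j).ne']
  have hxi := hxpos i
  have hxj := hxpos j
  have hti := hθsub i
  have htj := hθsub j
  have hc0 : 0 ≤ C i j := hCnonneg i j
  have hai1 : xstar i < 1 := by linarith
  have haj1 : xstar j < 1 := by linarith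
  -- clear denominators in hpair
  have hE : xstar i * ((1 - θ i) * (1 - θ j))
      + (1 + C i j) * ((1 - xstar i) * (θ i * xstar i)) * (1 - θ j)
      = xstar j * ((1 - θ i) * (1 - θ j))
      + (1 + C i j) * ((1 - xstar j) * (θ j * xstar j)) * (1 - θ i) := by
    linear_combination ((1 - θ i) * (1 - θ j)) * hpair
      - ((1 + C i j) * (1 - xstar i) * (1 - θ j)) * hyi2
      + ((1 + C i j) * (1 - xstar j) * (1 - θ i)) * hyj2
  -- key rearranged identity
  have hK : (xstar j - xstar i) * ((1 - θ i) * (1 - θ j))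
      = (1 + C i j) * ((1 - xstar i) * xstar i * (θ i * (1 - θ j))
          - (1 - xstar j) * xstar j * (θ j * (1 - θ i))) := by
    linear_combination -hE
  constructor
  · intro hab
    by_contra hq
    push_neg at hq   -- hq : θ i ≤ θ j
    have k1 : (1 - xstar i) * xstar i ≤ (1 - xstar j) * xstar j :=
      quad_mono hab.le hij_sum
    have k2 : θ i * (1 - θ j) ≤ θ j * (1 - θ i) := frac_mono hq
    have k3 : (1 - xstar i) * xstar i * (θ i * (1 - θ j))
        ≤ (1 - xstar j) * xstar j * (θ j * (1 - θ i)) := by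
      calc (1 - xstar i) * xstar i * (θ i * (1 - θ j))
          ≤ (1 - xstar j) * xstar j * (θ i * (1 - θ j)) := by
            apply mul_le_mul_of_nonneg_right k1
            exact mul_nonneg (hθ0 i) (by linarith)
        _ ≤ (1 - xstar j) * xstar j * (θ j * (1 - θ i)) := by
            apply mul_le_mul_of_nonneg_left k2
            exact mul_nonneg (by linarith) (by linarith)
    have hL : 0 < (xstar j - xstar i) * ((1 - θ i) * (1 - θ j)) :=
      mul_pos (by linarith) (mul_pos hti htj)
    have hR : (1 + C i j) * ((1 - xstar i) * xstar i * (θ i * (1 - θ j))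
        - (1 - xstar j) * xstar j * (θ j * (1 - θ i))) ≤ 0 :=
      mul_nonpos_of_nonneg_of_nonpos (by linarith) (by linarith)
    linarith [hK]
  · intro hq
    by_contra hab
    push_neg at hab  -- hab : xstar j ≤ xstar i
    have k1 : (1 - xstar j) * xstar j ≤ (1 - xstar i) * xstar i :=
      quad_mono hab (by linarith)
    have k2 : θ j * (1 - θ i) < θ i * (1 - θ j) := frac_mono_lt hq
    have k3 : (1 - xstar j) * xstar j * (θ j * (1 - θ i))
        < (1 - xstar i) * xstar i * (θ i * (1 - θ j)) := by
      calc (1 - xstar j) * xstar j * (θ j * (1 - θ i))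
          < (1 - xstar j) * xstar j * (θ i * (1 - θ j)) := by
            apply mul_lt_mul_of_pos_left k2
            exact mul_pos (by linarith) hxj
        _ ≤ (1 - xstar i) * xstar i * (θ i * (1 - θ j)) := by
            apply mul_le_mul_of_nonneg_right k1
            exact (mul_pos hi (by linarith)).le
    have hR : 0 < (1 + C i j) * ((1 - xstar i) * xstar i * (θ i * (1 - θ j))
        - (1 - xstar j) * xstar j * (θ j * (1 - θ i))) :=
      mul_pos (by linarith) (by linarith)
    have hL : (xstar j - xstar i) * ((1 - θ i) * (1 - θ j)) ≤ 0 :=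
      mul_nonpos_of_nonpos_of_nonneg (by linarith) (mul_pos hti htj).le
    linarith [hK]
end

section
/- The democratic vector (1/n)1_n is a fixed point of F if and only if the vector v ∈ ℝ^n with components v_i = θ_i/(1 − θ_i) is a left eigenvector of C associated with eigenvalue 1, i.e., Cᵀv = v; equivalently, Θ(I_n − Θ)^{−1}1_n is a left eigenvector of C corresponding to eigenvalue 1. -/
open Matrix

theorem stmt12 (n : ℕ) (hn : 2 ≤ n) (C : Matrix (Fin n) (Fin n) ℝ)
    (hCnonneg : ∀ i j, 0 ≤ C i j) (hCrow : ∀ i, ∑ j, C i j = 1)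
    (hCdiag : ∀ i, C i i = 0)
    (θ : Fin n → ℝ) (hθ0 : ∀ i, 0 ≤ θ i) (hθ1 : ∀ i, θ i < 1) (hθex : ∃ j, 0 < θ j) :
    Fmap C θ (fun _ => 1 / (n : ℝ)) = (fun _ => 1 / (n : ℝ)) ↔
      Cᵀ.mulVec (fun i => θ i / (1 - θ i)) = (fun i => θ i / (1 - θ i)) := by
  have hnR : (0:ℝ) < (n:ℝ) := by exact_mod_cast Nat.lt_of_lt_of_le Nat.zero_lt_two hn
  have hn0 : (n:ℝ) ≠ 0 := ne_of_gt hnR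
  have hn2 : (2:ℝ) ≤ (n:ℝ) := by exact_mod_cast hn
  have hinvn : (0:ℝ) < 1 / (n:ℝ) := by positivity
  have hinvn1 : 1 / (n:ℝ) < 1 := by rw [div_lt_one hnR]; linarith
  have hθpos : ∀ i, (0:ℝ) < 1 - θ i := fun i => by linarith [hθ1 i]
  set u : Fin n → ℝ := fun _ => 1 / (n : ℝ) with hu
  set v : Fin n → ℝ := fun i => θ i / (1 - θ i) with hv
  set w : Fin n → ℝ := fun i => (1 / (n:ℝ)) / (1 - θ i) with hw
  set W := Wmat C u with hWdef
  set M : Matrix (Fin n) (Fin n) ℝ := 1 - Wᵀ * Matrix.diagonal θ with hMdef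
  -- entries of W
  have hW : ∀ i j, W i j = (if i = j then 1/(n:ℝ) else 0) + (1 - 1/(n:ℝ)) * C i j := by
    intro i j
    show (Matrix.diagonal u + (1 - Matrix.diagonal u) * C) i j = _
    rw [Matrix.sub_mul, Matrix.one_mul, Matrix.add_apply, Matrix.sub_apply,
      Matrix.diagonal_mul, Matrix.diagonal_apply]
    by_cases h : i = j <;> simp [h, hu] <;> ring
  have hWnn : ∀ i j, 0 ≤ W i j := by
    intro i j
    rw [hW]
    have hA : 0 ≤ (1 - 1/(n:ℝ)) * C i j :=
      mul_nonneg (by linarith) (hCnonneg i j)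
    split <;> linarith
  have hWrow : ∀ i, ∑ j, W i j = 1 := by
    intro i
    simp only [hW]
    rw [Finset.sum_add_distrib, Finset.sum_ite_eq, ← Finset.mul_sum, hCrow]
    simp
  have hWdiag : ∀ i, W i i = 1/(n:ℝ) := by
    intro i; rw [hW]; simp [hCdiag i]
  -- entries of M
  have hM : ∀ i j, M i j = (if i = j then 1 else 0) - W j i * θ j := by
    intro i j
    rw [hMdef, Matrix.sub_apply, Matrix.mul_diagonal, Matrix.transpose_apply,
      Matrix.one_apply]
  -- M is invertible
  have hdet : M.det ≠ 0 := by
    apply det_ne_zero_of_sum_col_lt_diag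
    intro k
    have hMkk : M k k = 1 - θ k * (1/(n:ℝ)) := by rw [hM, hWdiag]; simp [mul_comm]
    have hpos : 0 < 1 - θ k * (1/(n:ℝ)) := by
      have : θ k * (1/(n:ℝ)) < 1 := by
        calc θ k * (1/(n:ℝ)) ≤ 1 * (1/(n:ℝ)) := by
              apply mul_le_mul_of_nonneg_right (le_of_lt (hθ1 k)) (le_of_lt hinvn)
          _ < 1 := by simpa using hinvn1
      linarith
    have hsum : ∑ i ∈ Finset.univ.erase k, ‖M i k‖
        = θ k * (1 - 1/(n:ℝ)) := by
      have : ∀ i ∈ Finset.univ.erase k, ‖M i k‖ = θ k * W k i := by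
        intro i hi
        have hik : i ≠ k := Finset.ne_of_mem_erase hi
        rw [hM, if_neg hik, zero_sub, norm_neg, Real.norm_eq_abs,
          abs_of_nonneg (mul_nonneg (hWnn k i) (hθ0 k)), mul_comm]
      rw [Finset.sum_congr rfl this, ← Finset.mul_sum,
        Finset.sum_erase_eq_sub (Finset.mem_univ k), hWrow, hWdiag]
    rw [hsum, hMkk, Real.norm_eq_abs, abs_of_pos hpos]
    nlinarith [hθ1 k, hinvn, hinvn1, hθ0 k]
  have hMu : IsUnit M.det := isUnit_iff_ne_zero.mpr hdet
  have hMM : M * M⁻¹ = 1 := Matrix.mul_nonsing_inv M hMu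
  have hMM' : M⁻¹ * M = 1 := Matrix.nonsing_inv_mul M hMu
  -- Fmap as a diagonal action
  have e1 : ∀ i, Fmap C θ u i = (1 - θ i) * (M⁻¹.mulVec u) i := by
    intro i
    show ((1 - Matrix.diagonal θ) * M⁻¹).mulVec u i = _
    rw [← Matrix.mulVec_mulVec]
    have : (1 : Matrix (Fin n) (Fin n) ℝ) - Matrix.diagonal θ
        = Matrix.diagonal (fun i => 1 - θ i) := by
      rw [← Matrix.diagonal_one, ← Matrix.diagonal_sub]
      try rfl
    rw [this, Matrix.mulVec_diagonal]
  have iff1 : Fmap C θ u = u ↔ M⁻¹.mulVec u = w := by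
    constructor
    · intro h
      funext i
      have hi := congrFun h i
      rw [e1] at hi
      have hne : (1 - θ i) ≠ 0 := ne_of_gt (hθpos i)
      have : w i = (1/(n:ℝ)) / (1 - θ i) := rfl
      rw [this, eq_div_iff hne]
      have : u i = 1/(n:ℝ) := rfl
      rw [this] at hi
      linear_combination hi
    · intro h
      funext i
      rw [e1, h]
      show (1 - θ i) * ((1/(n:ℝ)) / (1 - θ i)) = 1/(n:ℝ)
      have hne : (1 - θ i) ≠ 0 := ne_of_gt (hθpos i)
      field_simp
      try ring
  have iff2 : M⁻¹.mulVec u = w ↔ M.mulVec w = u := by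
    constructor
    · intro h
      rw [← h, Matrix.mulVec_mulVec, hMM, Matrix.one_mulVec]
    · intro h
      rw [← h, Matrix.mulVec_mulVec, hMM', Matrix.one_mulVec]
  -- component computation of M.mulVec w
  have hθw : ∀ j, θ j * w j = (1/(n:ℝ)) * v j := by
    intro j
    have hne : (1 - θ j) ≠ 0 := ne_of_gt (hθpos j)
    show θ j * ((1/(n:ℝ)) / (1 - θ j)) = (1/(n:ℝ)) * (θ j / (1 - θ j))
    field_simp
    try ring
  have hwi : ∀ i, w i = 1/(n:ℝ) + (1/(n:ℝ)) * v i := by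
    intro i
    have hne : (1 - θ i) ≠ 0 := ne_of_gt (hθpos i)
    show (1/(n:ℝ)) / (1 - θ i) = 1/(n:ℝ) + (1/(n:ℝ)) * (θ i / (1 - θ i))
    field_simp
    try ring
  have hCt : ∀ i, (Cᵀ.mulVec v) i = ∑ j, C j i * v j := by
    intro i
    simp [Matrix.mulVec, dotProduct, Matrix.transpose_apply]
  have hMw : ∀ i, M.mulVec w i
      = w i - (1/(n:ℝ)) * ((1/(n:ℝ)) * v i + (1 - 1/(n:ℝ)) * (Cᵀ.mulVec v) i) := by
    intro i
    have h1 : M.mulVec w i = ∑ j, M i j * w j := by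
      simp [Matrix.mulVec, dotProduct]
    have h2 : ∀ j, M i j * w j
        = (if i = j then w j else 0) - W j i * (θ j * w j) := by
      intro j
      rw [hM]
      by_cases h : i = j <;> simp [h] <;> ring
    rw [h1, Finset.sum_congr rfl fun j _ => h2 j, Finset.sum_sub_distrib,
      Finset.sum_ite_eq]
    simp only [Finset.mem_univ, if_pos]
    congr 1
    have h3 : ∀ j, W j i * (θ j * w j)
        = (if j = i then (1/(n:ℝ)) * ((1/(n:ℝ)) * v j) else 0)
          + (1/(n:ℝ)) * ((1 - 1/(n:ℝ)) * (C j i * v j)) := by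
      intro j
      rw [hθw j, hW j i]
      by_cases h : j = i <;> simp [h] <;> ring
    rw [Finset.sum_congr rfl fun j _ => h3 j, Finset.sum_add_distrib,
      Finset.sum_ite_eq', hCt]
    simp only [Finset.mem_univ, if_pos]
    rw [← Finset.mul_sum, ← Finset.mul_sum]
    ring
  have iff3 : M.mulVec w = u ↔ Cᵀ.mulVec v = v := by
    rw [funext_iff, funext_iff]
    refine forall_congr' fun i => ?_
    rw [hMw i]
    have hui : u i = 1/(n:ℝ) := rfl
    rw [hui]
    constructor
    · intro h
      have h2 : (1/(n:ℝ)) * ((1 - 1/(n:ℝ)) * (v i - (Cᵀ.mulVec v) i)) = 0 := by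
        linear_combination h - (hwi i)
      have hne : (1/(n:ℝ)) * (1 - 1/(n:ℝ)) ≠ 0 := by
        apply mul_ne_zero (ne_of_gt hinvn)
        linarith
      have := mul_eq_zero.mp h2
      rcases this with h' | h'
      · exact absurd h' (ne_of_gt hinvn)
      · rcases mul_eq_zero.mp h' with h'' | h''
        · exact absurd h'' (by linarith)
        · linarith
    · intro h
      rw [h]
      linear_combination (hwi i)
  exact iff1.trans (iff2.trans iff3)
end
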